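/- arXiv:2208.12210 — 5 statements merged into one kernel-verified Lean document; each statement's English description precedes it below -/
import Mathlib

section
/- For any finite directed graph G (possibly containing directed cycles) and any acyclification G' of G, the three independence models coincide: IM_σ(G) = IM_σ(G') = IM_d(G'). That is, for all subsets A, B, C of the vertex set, A is σ-separated from B by C in G if and only if A is σ-separated from B by C in G', if and only if A is d-separated from B by C in G'. -/
/-!
Directed (possibly cyclic) graphs on a vertex type `V` are given by their
edge relation `E : V → V → Prop`.
-/

/-- `Anc E i j` : `i` is an ancestor of `j` in the graph with edge relation `E`,
i.e. there is a directed path (possibly of length 0) from `i` to `j`. -/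
def Anc {V : Type*} (E : V → V → Prop) (i j : V) : Prop :=
  Relation.ReflTransGen E i j

/-- `InSC E i j` : `i` belongs to the strongly connected component of `j`,
i.e. `i ∈ AN_G(j) ∩ DE_G(j)`. -/
def InSC {V : Type*} (E : V → V → Prop) (i j : V) : Prop :=
  Anc E i j ∧ Anc E j i

/-- A directed graph is acyclic if it contains no directed cycle. -/
def Acyclic {V : Type*} (E : V → V → Prop) : Prop :=
  ∀ i, ¬ Relation.TransGen E i i

/-- `G' = (V, E')` is an acyclification of `G = (V, E)`:
`G'` is acyclic; for `i ∉ SC_G(j)`, `i → j ∈ E'` iff some `k ∈ SC_G(j)` has `i → k ∈ E`;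
and for distinct `i ∈ SC_G(j)`, `i → j ∈ E'` or `j → i ∈ E'`. -/
def IsAcyclification {V : Type*} (E E' : V → V → Prop) : Prop :=
  Acyclic E' ∧
  (∀ i j, ¬ InSC E i j → (E' i j ↔ ∃ k, InSC E k j ∧ E i k)) ∧
  (∀ i j, i ≠ j → InSC E i j → (E' i j ∨ E' j i))

/-- A walk in the graph with edge relation `E`: a sequence of `len + 1` vertices
`v 0, …, v len` together with edge directions `d 0, …, d (len - 1)`;
if `d k = true` the `k`-th edge is `v k → v (k+1) ∈ E`, otherwise it is
`v (k+1) → v k ∈ E`.  Vertices and edges may repeat. -/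
structure Walk {V : Type*} (E : V → V → Prop) where
  len : ℕ
  v : ℕ → V
  d : ℕ → Bool
  valid : ∀ k, k < len →
    (d k = true → E (v k) (v (k + 1))) ∧ (d k = false → E (v (k + 1)) (v k))

/-- The interior node at position `k` (with `0 < k < w.len`) is a collider on the
walk: both adjacent edges point into it. -/
def IsCollider {V : Type*} {E : V → V → Prop} (w : Walk E) (k : ℕ) : Prop :=
  w.d (k - 1) = true ∧ w.d k = false

/-- `x` is an ancestor of the set `C`. -/
def AncOfSet {V : Type*} (E : V → V → Prop) (C : Set V) (x : V) : Prop :=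
  ∃ c ∈ C, Anc E x c

/-- The walk `w` is d-blocked by the set `C`. -/
def DBlocked {V : Type*} (E : V → V → Prop) (C : Set V) (w : Walk E) : Prop :=
  w.v 0 ∈ C ∨ w.v w.len ∈ C ∨
  ∃ k, 0 < k ∧ k < w.len ∧
    ((IsCollider w k ∧ ¬ AncOfSet E C (w.v k)) ∨
     (¬ IsCollider w k ∧ w.v k ∈ C))

/-- The walk `w` is σ-blocked by the set `C`. -/
def SigmaBlocked {V : Type*} (E : V → V → Prop) (C : Set V) (w : Walk E) : Prop :=
  w.v 0 ∈ C ∨ w.v w.len ∈ C ∨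
  ∃ k, 0 < k ∧ k < w.len ∧
    ((IsCollider w k ∧ ¬ AncOfSet E C (w.v k)) ∨
     (w.v k ∈ C ∧
       ((w.d (k - 1) = true ∧ w.d k = true ∧ ¬ InSC E (w.v (k + 1)) (w.v k)) ∨
        (w.d (k - 1) = false ∧ w.d k = false ∧ ¬ InSC E (w.v (k - 1)) (w.v k)) ∨
        (w.d (k - 1) = false ∧ w.d k = true ∧
          (¬ InSC E (w.v (k - 1)) (w.v k) ∨ ¬ InSC E (w.v (k + 1)) (w.v k))))))

/-- `A` is d-separated from `B` by `C` in the graph with edge relation `E`. -/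
def DSep {V : Type*} (E : V → V → Prop) (A B C : Set V) : Prop :=
  ∀ w : Walk E, w.v 0 ∈ A → w.v w.len ∈ B → DBlocked E C w

/-- `A` is σ-separated from `B` by `C` in the graph with edge relation `E`. -/
def SigmaSep {V : Type*} (E : V → V → Prop) (A B C : Set V) : Prop :=
  ∀ w : Walk E, w.v 0 ∈ A → w.v w.len ∈ B → SigmaBlocked E C w

/-- The independence model under d-separation. -/
def IMd {V : Type*} (E : V → V → Prop) : Set (Set V × Set V × Set V) :=
  {t | DSep E t.1 t.2.1 t.2.2}

/-- The independence model under σ-separation. -/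
def IMsigma {V : Type*} (E : V → V → Prop) : Set (Set V × Set V × Set V) :=
  {t | SigmaSep E t.1 t.2.1 t.2.2}

/-!
In an acyclic graph every edge joins two different strongly connected components, so σ- and
d-blocking agree there; what remains is to turn σ-open walks of `G` into d-open walks of `G'`
with the same end points, and back. Walks are handled as chains of steps in which consecutive
steps meet at an open junction.

An edge `i → j` of `G'` comes from an edge `i → k` of `G` followed by a directed path from `k`
to `j` inside the component of `j`. Substituting these paths for the edges of a d-open walk of
`G'` gives a σ-open walk of `G`: the new interior nodes are non-colliders whose neighbours lie
in their own component, and the old junctions keep their orientation.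

Conversely, a σ-open walk of `G` is followed one component at a time. In `G'` a vertex with an
edge into a component has edges into all of it, and each component is a tournament, so the
passage through a component shrinks to at most two vertices. If the walk both enters and
leaves a component through arrowheads, it has a collider there, hence an ancestor of `C` in
that component, and the vertex where the ancestral path leaves the component is an ancestor
of `C` in `G'` that serves as the collider.
-/

/-- A traversed edge: `dir = true` means the edge `src → tgt` was crossed forwards,
`dir = false` that the edge `tgt → src` was crossed backwards. -/
structure Step (V : Type*) where
  src : V
  dir : Bool
  tgt : V

section Steps

variable {V : Type*} (E : V → V → Prop)

def Step.IsEdge (s : Step V) : Prop :=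
  (s.dir = true → E s.src s.tgt) ∧ (s.dir = false → E s.tgt s.src)

/-- `J s t` is the condition for the junction at `t.src` of two consecutive steps to be open. -/
def Step.Link (J : Step V → Step V → Prop) (s t : Step V) : Prop :=
  t.IsEdge E ∧ s.tgt = t.src ∧ J s t

def OpenWalkTo (J : Step V → Step V → Prop) (x : V) (t : Step V) : Prop :=
  ∃ s, s.src = x ∧ s.IsEdge E ∧ Relation.ReflTransGen (Step.Link E J) s t

def OpenConn (J : Step V → Step V → Prop) (x y : V) : Prop :=
  x = y ∨ ∃ t, OpenWalkTo E J x t ∧ t.tgt = y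

variable {E} {J : Step V → Step V → Prop} {x : V} {s t : Step V}

lemma OpenWalkTo.single (ht : t.IsEdge E) (hx : t.src = x) : OpenWalkTo E J x t :=
  ⟨t, hx, ht, .refl⟩

lemma OpenWalkTo.tail (hs : OpenWalkTo E J x s) (hst : Step.Link E J s t) :
    OpenWalkTo E J x t :=
  let ⟨r, hr, hre, hrs⟩ := hs
  ⟨r, hr, hre, hrs.tail hst⟩

lemma OpenWalkTo.trans (hs : OpenWalkTo E J x s)
    (hst : Relation.ReflTransGen (Step.Link E J) s t) : OpenWalkTo E J x t :=
  let ⟨r, hr, hre, hrs⟩ := hs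
  ⟨r, hr, hre, hrs.trans hst⟩

end Steps

namespace Walk

variable {V : Type*} {E : V → V → Prop}

def step (w : Walk E) (k : ℕ) : Step V := ⟨w.v k, w.d k, w.v (k + 1)⟩

def IsOpen (J : Step V → Step V → Prop) (w : Walk E) : Prop :=
  ∀ k, 0 < k → k < w.len → J (w.step (k - 1)) (w.step k)

def nil (E : V → V → Prop) (x : V) : Walk E :=
  ⟨0, fun _ => x, fun _ => true, fun _ hk => absurd hk (Nat.not_lt_zero _)⟩

def snoc (w : Walk E) (t : Step V) (ht : t.IsEdge E) (hw : w.v w.len = t.src) : Walk E where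
  len := w.len + 1
  v k := if k ≤ w.len then w.v k else t.tgt
  d k := if k < w.len then w.d k else t.dir
  valid k hk := by
    rcases Nat.lt_or_ge k w.len with hk' | hk'
    · simpa [hk', hk'.le, Nat.succ_le_of_lt hk'] using w.valid k hk'
    · obtain rfl : k = w.len := by omega
      simp only [lt_irrefl, if_false, le_refl, if_true, Nat.not_succ_le_self, hw]
      exact ht

variable {J : Step V → Step V → Prop} {w : Walk E} {t : Step V} {ht : t.IsEdge E}
  {hw : w.v w.len = t.src}

lemma snoc_v_zero : (w.snoc t ht hw).v 0 = w.v 0 := by simp [snoc]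

lemma snoc_step_of_lt {k : ℕ} (hk : k < w.len) : (w.snoc t ht hw).step k = w.step k := by
  simp [snoc, step, hk, hk.le, Nat.succ_le_of_lt hk]

lemma snoc_step_len : (w.snoc t ht hw).step w.len = t := by
  simp only [snoc, step, le_refl, if_true, lt_irrefl, if_false, Nat.not_succ_le_self, hw]

lemma IsOpen.snoc (hw' : w.IsOpen J) (hJ : 0 < w.len → J (w.step (w.len - 1)) t) :
    (w.snoc t ht hw).IsOpen J := by
  intro k hk0 hk
  change k < w.len + 1 at hk
  rw [snoc_step_of_lt (by omega)]
  rcases Nat.lt_or_ge k w.len with hk' | hk'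
  · rw [snoc_step_of_lt hk']
    exact hw' k hk0 hk'
  · obtain rfl : k = w.len := by omega
    rw [snoc_step_len]
    exact hJ hk0

lemma step_link (hw' : w.IsOpen J) {k : ℕ} (hk : k + 1 < w.len) :
    Step.Link E J (w.step k) (w.step (k + 1)) :=
  ⟨w.valid (k + 1) hk, rfl, hw' (k + 1) k.succ_pos hk⟩

lemma openWalkTo_step (hw' : w.IsOpen J) {k : ℕ} (hk : k < w.len) :
    OpenWalkTo E J (w.v 0) (w.step k) := by
  induction k with
  | zero => exact .single (w.valid 0 hk) rfl
  | succ k ih => exact (ih (by omega)).tail (step_link hw' hk)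

end Walk

section Bridge

variable {V : Type*} {E : V → V → Prop} {J : Step V → Step V → Prop}

lemma OpenWalkTo.exists_walk {x : V} {t : Step V} (ht : OpenWalkTo E J x t) :
    ∃ w : Walk E, w.v 0 = x ∧ 0 < w.len ∧ w.step (w.len - 1) = t ∧ w.IsOpen J := by
  obtain ⟨s, rfl, hs, hst⟩ := ht
  induction hst with
  | refl =>
    exact ⟨(Walk.nil E s.src).snoc s hs rfl, Walk.snoc_v_zero, Nat.succ_pos 0,
      Walk.snoc_step_len, Walk.IsOpen.snoc (fun _ _ h => absurd h (Nat.not_lt_zero _))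
        (fun h => absurd h (Nat.not_lt_zero _))⟩
  | @tail r t _ hlink ih =>
    obtain ⟨hedge, hsrc, hJ⟩ := hlink
    obtain ⟨w, hw0, hlen, hlast, hopen⟩ := ih
    have hend : w.v w.len = t.src := by
      rw [← hsrc, ← hlast, Walk.step, Nat.sub_add_cancel hlen]
    exact ⟨w.snoc t hedge hend, Walk.snoc_v_zero.trans hw0, Nat.succ_pos _,
      Walk.snoc_step_len, hopen.snoc fun _ => hlast ▸ hJ⟩

lemma openConn_iff_exists_walk {x y : V} :
    OpenConn E J x y ↔ ∃ w : Walk E, w.v 0 = x ∧ w.v w.len = y ∧ w.IsOpen J := by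
  constructor
  · rintro (rfl | ⟨t, ht, rfl⟩)
    · exact ⟨Walk.nil E x, rfl, rfl, fun _ _ h => absurd h (Nat.not_lt_zero _)⟩
    · obtain ⟨w, hw0, hlen, hlast, hopen⟩ := ht.exists_walk
      refine ⟨w, hw0, ?_, hopen⟩
      rw [← hlast, Walk.step, Nat.sub_add_cancel hlen]
  · rintro ⟨w, rfl, rfl, hopen⟩
    rcases Nat.eq_zero_or_pos w.len with hlen | hlen
    · exact .inl (by rw [hlen])
    · refine .inr ⟨_, w.openWalkTo_step hopen (Nat.sub_lt hlen Nat.one_pos), ?_⟩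
      simp only [Walk.step, Nat.sub_add_cancel hlen]

lemma forall_walk_blocked_iff {C A B : Set V} {Blocked : Walk E → Prop}
    (hB : ∀ w, Blocked w ↔ w.v 0 ∈ C ∨ w.v w.len ∈ C ∨ ¬ w.IsOpen J) :
    (∀ w : Walk E, w.v 0 ∈ A → w.v w.len ∈ B → Blocked w) ↔
      ∀ x ∈ A, ∀ y ∈ B, x ∉ C → y ∉ C → ¬ OpenConn E J x y := by
  simp_rw [openConn_iff_exists_walk, hB]
  constructor
  · rintro h _ hx _ hy hxC hyC ⟨w, rfl, rfl, hw⟩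
    rcases h w hx hy with h | h | h <;> contradiction
  · intro h w hA hB
    by_contra hw
    push Not at hw
    exact h _ hA _ hB hw.1 hw.2.1 ⟨w, rfl, rfl, hw.2.2⟩

end Bridge

section Junctions

variable {V : Type*} (E : V → V → Prop) (C : Set V)

def DOpen (s t : Step V) : Prop :=
  (s.dir = true → t.dir = false → AncOfSet E C t.src) ∧
  (¬ (s.dir = true ∧ t.dir = false) → t.src ∉ C)

/-- The three non-collider cases of σ-blocking, regrouped by the walk edge that points away
from the node. -/
def SigmaOpen (s t : Step V) : Prop :=
  (s.dir = true → t.dir = false → AncOfSet E C t.src) ∧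
  (t.dir = true → ¬ InSC E t.tgt t.src → t.src ∉ C) ∧
  (s.dir = false → ¬ InSC E s.src t.src → t.src ∉ C)

variable {E C}

lemma dBlocked_iff (w : Walk E) :
    DBlocked E C w ↔ w.v 0 ∈ C ∨ w.v w.len ∈ C ∨ ¬ w.IsOpen (DOpen E C) := by
  simp only [DBlocked, Walk.IsOpen, IsCollider, DOpen, Walk.step, not_forall, exists_prop]
  refine or_congr_right (or_congr_right (exists_congr fun k => and_congr_right fun _ =>
    and_congr_right fun _ => ?_))
  tauto

lemma sigmaBlocked_iff (w : Walk E) :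
    SigmaBlocked E C w ↔ w.v 0 ∈ C ∨ w.v w.len ∈ C ∨ ¬ w.IsOpen (SigmaOpen E C) := by
  simp only [SigmaBlocked, Walk.IsOpen, IsCollider, SigmaOpen, Walk.step, not_forall,
    exists_prop]
  refine or_congr_right (or_congr_right (exists_congr fun k => and_congr_right fun _ =>
    and_congr_right fun _ => ?_))
  cases w.d (k - 1) <;> cases w.d k <;>
    simp only [Bool.false_eq_true, Bool.true_eq_false, true_and, false_and, and_true, and_false,
      and_self, false_or, or_false, or_self, forall_const, IsEmpty.forall_iff,
      not_and, Classical.not_imp, not_not] <;> tauto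

lemma dSep_iff {A B : Set V} :
    DSep E A B C ↔ ∀ x ∈ A, ∀ y ∈ B, x ∉ C → y ∉ C → ¬ OpenConn E (DOpen E C) x y :=
  forall_walk_blocked_iff dBlocked_iff

lemma sigmaSep_iff {A B : Set V} :
    SigmaSep E A B C ↔ ∀ x ∈ A, ∀ y ∈ B, x ∉ C → y ∉ C → ¬ OpenConn E (SigmaOpen E C) x y :=
  forall_walk_blocked_iff sigmaBlocked_iff

lemma not_inSC_of_edge (hE : Acyclic E) {a b : V} (hab : E a b) : ¬ InSC E b a :=
  fun hba => hE a (.head' hab hba.1)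

lemma sigmaOpen_iff_dOpen_of_acyclic (hE : Acyclic E) {s t : Step V} (hs : s.IsEdge E)
    (ht : t.IsEdge E) (hst : s.tgt = t.src) : SigmaOpen E C s t ↔ DOpen E C s t := by
  obtain ⟨a, d₁, b⟩ := s
  obtain ⟨b', d₂, c⟩ := t
  obtain rfl : b = b' := hst
  cases d₁ <;> cases d₂ <;>
    simp_all [SigmaOpen, DOpen, Step.IsEdge, not_inSC_of_edge hE]

lemma sigmaSep_iff_dSep_of_acyclic (hE : Acyclic E) {A B : Set V} :
    SigmaSep E A B C ↔ DSep E A B C := by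
  suffices ∀ w : Walk E, SigmaBlocked E C w ↔ DBlocked E C w from
    forall_congr' fun w => imp_congr_right fun _ => imp_congr_right fun _ => this w
  intro w
  rw [sigmaBlocked_iff, dBlocked_iff]
  refine or_congr_right (or_congr_right (not_congr (forall₃_congr fun k hk0 hk => ?_)))
  exact sigmaOpen_iff_dOpen_of_acyclic hE (w.valid _ (by omega))
    (w.valid k hk) (by simp [Walk.step, Nat.sub_add_cancel hk0])

end Junctions

namespace InSC

variable {V : Type*} {E : V → V → Prop} {a b c : V}

lemma refl (a : V) : InSC E a a := ⟨.refl, .refl⟩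

lemma symm (h : InSC E a b) : InSC E b a := ⟨h.2, h.1⟩

lemma trans (h : InSC E a b) (h' : InSC E b c) : InSC E a c :=
  ⟨h.1.trans h'.1, h'.2.trans h.2⟩

end InSC

namespace IsAcyclification

variable {V : Type*} {E E' : V → V → Prop}

lemma edge_of_edge (h : IsAcyclification E E') {i j k : V} (hik : E i k) (hkj : InSC E k j)
    (hij : ¬ InSC E i j) : E' i j :=
  (h.2.1 i j hij).2 ⟨k, hkj, hik⟩

lemma exists_inSC_edge (h : IsAcyclification E E') {i j : V} (hij : E' i j) :
    ∃ k, InSC E k j ∧ E i k := by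
  by_cases hin : InSC E i j
  · rcases hin.1.cases_head with rfl | ⟨k, hik, hkj⟩
    · exact absurd (.single hij) (h.1 i)
    · exact ⟨k, ⟨hkj, hin.2.tail hik⟩, hik⟩
  · exact (h.2.1 i j hin).1 hij

lemma anc_of_anc' (h : IsAcyclification E E') {i j : V} (hij : Anc E' i j) : Anc E i j := by
  induction hij with
  | refl => exact .refl
  | tail _ hbc ih =>
    obtain ⟨k, hkc, hk⟩ := h.exists_inSC_edge hbc
    exact ih.trans (.head hk hkc.1)

lemma ancOfSet_of_ancOfSet' (h : IsAcyclification E E') {C : Set V} {x : V}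
    (hx : AncOfSet E' C x) : AncOfSet E C x :=
  let ⟨c, hc, hxc⟩ := hx
  ⟨c, hc, h.anc_of_anc' hxc⟩

/-- The witness `m` is the vertex at which the path from `p` to `c` last leaves the component
of `p`: from there `E'` has an edge into each later component the path visits. -/
lemma exists_inSC_anc' (h : IsAcyclification E E') {p c : V} (hpc : Anc E p c) :
    ∃ m, InSC E m p ∧ Anc E' m c := by
  induction hpc using Relation.ReflTransGen.head_induction_on with
  | refl => exact ⟨c, .refl c, .refl⟩
  | @head p q hpq _ ih =>
    obtain ⟨m, hmq, hmc⟩ := ih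
    by_cases hin : InSC E p q
    · exact ⟨m, hmq.trans hin.symm, hmc⟩
    · exact ⟨p, .refl p, .head (h.edge_of_edge hpq hmq.symm
        fun hpm => hin (hpm.trans hmq)) hmc⟩

lemma exists_inSC_ancOfSet' (h : IsAcyclification E E') {C : Set V} {p : V}
    (hp : AncOfSet E C p) : ∃ m, InSC E m p ∧ AncOfSet E' C m :=
  let ⟨c, hc, hpc⟩ := hp
  let ⟨m, hmp, hmc⟩ := h.exists_inSC_anc' hpc
  ⟨m, hmp, c, hc, hmc⟩

end IsAcyclification

section DToSigma

variable {V : Type*} {E E' : V → V → Prop} {C : Set V}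

lemma sigmaOpen_of_dOpen' (h : IsAcyclification E E') {s t s' t' : Step V}
    (hd : DOpen E' C s' t') (hs : s.dir = s'.dir) (ht : t.dir = t'.dir) (hmid : t.src = t'.src) :
    SigmaOpen E C s t := by
  obtain ⟨hcol, hnon⟩ := hd
  rw [← hs, ← ht, ← hmid] at hcol hnon
  refine ⟨fun h₁ h₂ => h.ancOfSet_of_ancOfSet' (hcol h₁ h₂), fun h₁ _ => hnon ?_,
    fun h₁ _ => hnon ?_⟩ <;> simp [h₁]

lemma exists_forward_sigmaChain {a k b : V} (hkb : Anc E k b) (hin : InSC E k b) :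
    ∃ last : Step V, last.tgt = b ∧ last.dir = true ∧
      Relation.ReflTransGen (Step.Link E (SigmaOpen E C)) ⟨a, true, k⟩ last := by
  induction hkb with
  | refl => exact ⟨_, rfl, rfl, .refl⟩
  | @tail m b hkm hmb ih =>
    obtain ⟨last, rfl, hdir, hchain⟩ := ih ⟨hkm, .head hmb hin.2⟩
    have hbm : InSC E b last.tgt := ⟨hin.2.trans hkm, .single hmb⟩
    refine ⟨⟨last.tgt, true, b⟩, rfl, rfl, hchain.tail ⟨⟨fun _ => hmb, nofun⟩, rfl, ?_⟩⟩
    exact ⟨nofun, fun _ h => absurd hbm h, fun h => by simp [hdir] at h⟩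

lemma exists_backward_sigmaChain {a k b : V} (hbk : E b k) (hka : Anc E k a) (hin : InSC E k a) :
    ∃ first : Step V, first.src = a ∧ first.dir = false ∧ first.IsEdge E ∧
      Relation.ReflTransGen (Step.Link E (SigmaOpen E C)) first ⟨k, false, b⟩ := by
  induction hka using Relation.ReflTransGen.head_induction_on generalizing b with
  | refl => exact ⟨⟨a, false, b⟩, rfl, rfl, ⟨nofun, fun _ => hbk⟩, .refl⟩
  | @head k m hkm hma ih =>
    obtain ⟨first, hsrc, hdir, hedge, hchain⟩ := ih hkm ⟨hma, hin.2.tail hkm⟩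
    have hmk : InSC E m k := ⟨hma.trans hin.2, .single hkm⟩
    refine ⟨first, hsrc, hdir, hedge, hchain.tail ⟨⟨nofun, fun _ => hbk⟩, rfl, ?_⟩⟩
    exact ⟨nofun, nofun, fun _ h => absurd hmk h⟩

lemma exists_sigmaChain_of_edge' (h : IsAcyclification E E') {r : Step V} (hr : r.IsEdge E') :
    ∃ first last : Step V, first.src = r.src ∧ first.dir = r.dir ∧ first.IsEdge E ∧
      last.tgt = r.tgt ∧ last.dir = r.dir ∧
      Relation.ReflTransGen (Step.Link E (SigmaOpen E C)) first last := by
  obtain ⟨a, d, b⟩ := r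
  cases d with
  | true =>
    obtain ⟨k, hkb, hak⟩ := h.exists_inSC_edge (hr.1 rfl)
    obtain ⟨last, hlast, hdir, hchain⟩ := exists_forward_sigmaChain (C := C) (a := a) hkb.1 hkb
    exact ⟨⟨a, true, k⟩, last, rfl, rfl, ⟨fun _ => hak, nofun⟩, hlast, hdir, hchain⟩
  | false =>
    obtain ⟨k, hka, hbk⟩ := h.exists_inSC_edge (hr.2 rfl)
    obtain ⟨first, hsrc, hdir, hedge, hchain⟩ := exists_backward_sigmaChain (C := C) hbk hka.1 hka
    exact ⟨first, ⟨k, false, b⟩, hsrc, hdir, hedge, rfl, rfl, hchain⟩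

lemma exists_sigma_openWalkTo_of_d_openWalkTo (h : IsAcyclification E E') {x : V}
    {r : Step V} (hr : OpenWalkTo E' (DOpen E' C) x r) :
    ∃ ρ : Step V, OpenWalkTo E (SigmaOpen E C) x ρ ∧ ρ.tgt = r.tgt ∧ ρ.dir = r.dir := by
  obtain ⟨s, rfl, hs, hsr⟩ := hr
  induction hsr with
  | refl =>
    obtain ⟨first, last, hsrc, -, hedge, htgt, hdir, hchain⟩ := exists_sigmaChain_of_edge' h hs
    exact ⟨last, (OpenWalkTo.single hedge hsrc).trans hchain, htgt, hdir⟩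
  | tail _ hlink ih =>
    obtain ⟨hedge', hmid, hd⟩ := hlink
    obtain ⟨ρ, hρ, hρtgt, hρdir⟩ := ih
    obtain ⟨first, last, hsrc, hfdir, hedge, htgt, hdir, hchain⟩ :=
      exists_sigmaChain_of_edge' h hedge'
    refine ⟨last, (hρ.tail ⟨hedge, ?_, ?_⟩).trans hchain, htgt, hdir⟩
    · rw [hρtgt, hmid, hsrc]
    · exact sigmaOpen_of_dOpen' h hd hρdir hfdir hsrc

lemma sigma_openConn_of_d_openConn (h : IsAcyclification E E') {x y : V}
    (hxy : OpenConn E' (DOpen E' C) x y) : OpenConn E (SigmaOpen E C) x y := by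
  rcases hxy with rfl | ⟨r, hr, rfl⟩
  · exact .inl rfl
  · obtain ⟨ρ, hρ, hρtgt, -⟩ := exists_sigma_openWalkTo_of_d_openWalkTo h hr
    exact .inr ⟨ρ, hρ, hρtgt⟩

end DToSigma

section DExtension

variable {V : Type*} {E : V → V → Prop} {C : Set V} {x g : V} {s t : Step V}

lemma dOpen_of_not_mem (hC : t.src ∉ C) (hnc : ¬ (s.dir = true ∧ t.dir = false)) :
    DOpen E C s t :=
  ⟨fun h₁ h₂ => absurd ⟨h₁, h₂⟩ hnc, fun _ => hC⟩

lemma dOpen_of_collider (hs : s.dir = true) (ht : t.dir = false) (hC : AncOfSet E C t.src) :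
    DOpen E C s t :=
  ⟨fun _ _ => hC, fun hnc => absurd ⟨hs, ht⟩ hnc⟩

lemma OpenConn.openWalkTo_of_dir_eq_true (hg : OpenConn E (DOpen E C) x t.src)
    (hC : t.src ∉ C) (ht : t.IsEdge E) (hdir : t.dir = true) :
    OpenWalkTo E (DOpen E C) x t := by
  rcases hg with hx | ⟨s, hs, hst⟩
  · exact .single ht hx.symm
  · exact hs.tail ⟨ht, hst, dOpen_of_not_mem hC (by simp [hdir])⟩

variable (E C) in
/-- `g` is reached from `x` by a d-open walk that is empty or ends with an edge pointing out of
`g`, so that any edge may follow it when `g ∉ C`. -/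
def OpenConnOutOf (x g : V) : Prop :=
  g = x ∨ ∃ s, OpenWalkTo E (DOpen E C) x s ∧ s.tgt = g ∧ s.dir = false

lemma OpenConnOutOf.openConn (hg : OpenConnOutOf E C x g) : OpenConn E (DOpen E C) x g := by
  rcases hg with rfl | ⟨s, hs, hst, -⟩
  · exact .inl rfl
  · exact .inr ⟨s, hs, hst⟩

lemma OpenConnOutOf.openWalkTo (hg : OpenConnOutOf E C x t.src) (hC : t.src ∉ C)
    (ht : t.IsEdge E) : OpenWalkTo E (DOpen E C) x t := by
  rcases hg with hx | ⟨s, hs, hst, hdir⟩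
  · exact .single ht hx
  · exact hs.tail ⟨ht, hst, dOpen_of_not_mem hC (by simp [hdir])⟩

end DExtension

section SigmaToD

variable {V : Type*} (E E' : V → V → Prop) (C : Set V) (x : V)

/-- How a d-open `E'`-walk from `x` shadows a σ-open `E`-walk that has arrived at `u`: either it
has reached a vertex `g` of the strongly connected component of `u` through an edge pointing
out of `g`, or it waits at a vertex `g ∉ C` with `E'`-edges into the whole component of `u`,
to be continued into a collider there if the `E`-walk leaves the component backwards. -/
def Shadow (u : V) (inside : V → Prop) (outside : Prop) : Prop :=
  (∃ g, InSC E g u ∧ inside g ∧ OpenConnOutOf E' C x g) ∨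
  (∃ g, g ∉ C ∧ (∀ m, InSC E m u → E' g m) ∧ OpenConn E' (DOpen E' C) x g ∧ outside)

def ShadowBefore (t : Step V) : Prop :=
  (t.dir = true → ¬ InSC E t.tgt t.src → t.src ∉ C) ∧
  Shadow E E' C x t.src (· ∉ C) (t.dir = false → ∃ p, InSC E p t.src ∧ AncOfSet E C p)

/-- The `inside` condition is weaker than in `ShadowBefore` because whether the vertex just
entered lies in `C` is only known from the junction that follows it. -/
def ShadowAfter (t : Step V) : Prop :=
  Shadow E E' C x t.tgt (fun g => g ∉ C ∨ g = t.tgt ∧ t.dir = false ∧ ¬ InSC E t.src t.tgt)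
    (t.dir = true ∨ ∃ p, InSC E p t.tgt ∧ AncOfSet E C p)

variable {E E' C x}

lemma Shadow.openConn (h : IsAcyclification E E') {u : V} {Q : Prop}
    (hs : Shadow E E' C x u (· ∉ C) Q) : OpenConn E' (DOpen E' C) x u := by
  rcases hs with ⟨g, hgu, hgC, hg⟩ | ⟨g, hgC, hgE', hg, -⟩
  · by_cases hne : g = u
    · exact hne ▸ hg.openConn
    rcases h.2.2 g u hne hgu with hE' | hE'
    · exact .inr ⟨⟨g, true, u⟩, hg.openWalkTo hgC ⟨fun _ => hE', nofun⟩, rfl⟩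
    · exact .inr ⟨⟨g, false, u⟩, hg.openWalkTo hgC ⟨nofun, fun _ => hE'⟩, rfl⟩
  · exact .inr ⟨⟨g, true, u⟩,
      hg.openWalkTo_of_dir_eq_true hgC ⟨fun _ => hgE' u (.refl u), nofun⟩ rfl, rfl⟩

lemma shadowBefore_start (hx : x ∉ C) {t : Step V} (ht : t.src = x) :
    ShadowBefore E E' C x t :=
  ⟨fun _ _ => ht ▸ hx, .inl ⟨t.src, .refl _, ht ▸ hx, .inl ht⟩⟩

lemma ShadowAfter.shadowBefore {s t : Step V} (hs : ShadowAfter E E' C x s)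
    (hst : Step.Link E (SigmaOpen E C) s t) : ShadowBefore E E' C x t := by
  obtain ⟨-, hmid, hcol, hfwd, hbwd⟩ := hst
  refine ⟨hfwd, ?_⟩
  rw [ShadowAfter, hmid] at hs
  rcases hs with ⟨g, hgu, hgC, hg⟩ | ⟨g, hgC, hgE', hg, hflag⟩
  · refine .inl ⟨g, hgu, ?_, hg⟩
    rcases hgC with hgC | ⟨rfl, hdir, hout⟩
    · exact hgC
    · exact hbwd hdir hout
  · refine .inr ⟨g, hgC, hgE', hg, fun hdir => ?_⟩
    cases hsdir : s.dir
    · simpa [hsdir] using hflag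
    · exact ⟨t.src, .refl _, hcol hsdir hdir⟩

lemma ShadowBefore.shadowAfter_of_inSC {t : Step V} (hs : ShadowBefore E E' C x t)
    (hin : InSC E t.tgt t.src) : ShadowAfter E E' C x t := by
  rcases hs.2 with ⟨g, hgu, hgC, hg⟩ | ⟨g, hgC, hgE', hg, hflag⟩
  · exact .inl ⟨g, hgu.trans hin.symm, .inl hgC, hg⟩
  · refine .inr ⟨g, hgC, fun m hm => hgE' m (hm.trans hin), hg, ?_⟩
    cases hdir : t.dir
    · obtain ⟨p, hp, hpC⟩ := hflag hdir
      exact .inr ⟨p, hp.trans hin.symm, hpC⟩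
    · exact .inl rfl

lemma ShadowBefore.shadowAfter_of_forward (h : IsAcyclification E E') {t : Step V}
    (hs : ShadowBefore E E' C x t) (ht : E t.src t.tgt) (hdir : t.dir = true)
    (hout : ¬ InSC E t.tgt t.src) : ShadowAfter E E' C x t :=
  .inr ⟨t.src, hs.1 hdir hout,
    fun _ hm => h.edge_of_edge ht hm.symm fun hu => hout (hm.symm.trans hu.symm),
    Shadow.openConn h hs.2, .inl hdir⟩

lemma ShadowBefore.shadowAfter_of_backward (h : IsAcyclification E E') {t : Step V}
    (hs : ShadowBefore E E' C x t) (ht : E t.tgt t.src) (hdir : t.dir = false)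
    (hout : ¬ InSC E t.tgt t.src) : ShadowAfter E E' C x t := by
  have hE' : ∀ m, InSC E m t.src → E' t.tgt m :=
    fun _ hm => h.edge_of_edge ht hm.symm fun hv => hout (hv.trans hm)
  suffices ∃ r, OpenWalkTo E' (DOpen E' C) x r ∧ r.tgt = t.tgt ∧ r.dir = false from
    .inl ⟨t.tgt, .refl _, .inr ⟨rfl, hdir, fun hin => hout hin.symm⟩, .inr this⟩
  rcases hs.2 with ⟨g, hgu, hgC, hg⟩ | ⟨g, hgC, hgE', hg, hflag⟩
  · exact ⟨⟨g, false, t.tgt⟩, hg.openWalkTo hgC ⟨nofun, fun _ => hE' g hgu⟩, rfl, rfl⟩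
  · obtain ⟨p, hpu, hpC⟩ := hflag hdir
    obtain ⟨m, hmp, hmC⟩ := h.exists_inSC_ancOfSet' hpC
    have hmu := hmp.trans hpu
    have hgm := hg.openWalkTo_of_dir_eq_true (t := ⟨g, true, m⟩) hgC
      ⟨fun _ => hgE' m hmu, nofun⟩ rfl
    exact ⟨⟨m, false, t.tgt⟩,
      hgm.tail ⟨⟨nofun, fun _ => hE' m hmu⟩, rfl, dOpen_of_collider rfl rfl hmC⟩, rfl, rfl⟩

lemma ShadowBefore.shadowAfter (h : IsAcyclification E E') {t : Step V}
    (hs : ShadowBefore E E' C x t) (ht : t.IsEdge E) : ShadowAfter E E' C x t := by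
  by_cases hin : InSC E t.tgt t.src
  · exact hs.shadowAfter_of_inSC hin
  cases hdir : t.dir
  · exact hs.shadowAfter_of_backward h (ht.2 hdir) hdir hin
  · exact hs.shadowAfter_of_forward h (ht.1 hdir) hdir hin

lemma shadowAfter_of_openWalkTo (h : IsAcyclification E E') (hx : x ∉ C) {t : Step V}
    (ht : OpenWalkTo E (SigmaOpen E C) x t) : ShadowAfter E E' C x t := by
  obtain ⟨s, hsx, hs, hst⟩ := ht
  induction hst with
  | refl => exact (shadowBefore_start hx hsx).shadowAfter h hs
  | tail _ hlink ih => exact (ih.shadowBefore hlink).shadowAfter h hlink.1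

lemma d_openConn_of_sigma_openConn (h : IsAcyclification E E') {y : V} (hx : x ∉ C)
    (hy : y ∉ C) (hxy : OpenConn E (SigmaOpen E C) x y) : OpenConn E' (DOpen E' C) x y := by
  rcases hxy with rfl | ⟨t, ht, rfl⟩
  · exact .inl rfl
  refine Shadow.openConn h (Q := True) ?_
  rcases shadowAfter_of_openWalkTo h hx ht with ⟨g, hgu, hgC, hg⟩ | ⟨g, hgC, hgE', hg, -⟩
  · refine .inl ⟨g, hgu, ?_, hg⟩
    rcases hgC with hgC | ⟨rfl, -⟩
    · exact hgC
    · exact hy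
  · exact .inr ⟨g, hgC, hgE', hg, trivial⟩

end SigmaToD

lemma IsAcyclification.sigmaSep_iff_dSep {V : Type*} {E E' : V → V → Prop}
    (h : IsAcyclification E E') {A B C : Set V} : SigmaSep E A B C ↔ DSep E' A B C := by
  rw [sigmaSep_iff, dSep_iff]
  refine forall₂_congr fun x _ => forall₂_congr fun y _ => forall₂_congr fun hx hy => ?_
  exact not_congr ⟨d_openConn_of_sigma_openConn h hx hy, sigma_openConn_of_d_openConn h⟩

theorem acyclification_independence_models_general {V : Type*}
    (E E' : V → V → Prop)
    (h : IsAcyclification E E') :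
    IMsigma E = IMsigma E' ∧ IMsigma E' = IMd E' ∧
    ∀ A B C : Set V,
      (SigmaSep E A B C ↔ SigmaSep E' A B C) ∧
      (SigmaSep E' A B C ↔ DSep E' A B C) := by
  have hE' : ∀ A B C : Set V, SigmaSep E' A B C ↔ DSep E' A B C :=
    fun _ _ _ => sigmaSep_iff_dSep_of_acyclic h.1
  have hE : ∀ A B C : Set V, SigmaSep E A B C ↔ SigmaSep E' A B C :=
    fun A B C => h.sigmaSep_iff_dSep.trans (hE' A B C).symm
  exact ⟨Set.ext fun t => hE t.1 t.2.1 t.2.2, Set.ext fun t => hE' t.1 t.2.1 t.2.2,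
    fun A B C => ⟨hE A B C, hE' A B C⟩⟩

/-- For any finite directed graph `G` (possibly cyclic) and any
acyclification `G'` of `G`, `IM_σ(G) = IM_σ(G') = IM_d(G')`; i.e. for all subsets
`A, B, C` of the vertex set, σ-separation in `G`, σ-separation in `G'`, and
d-separation in `G'` all coincide. -/
theorem acyclification_independence_models {V : Type*} [Fintype V]
    (E E' : V → V → Prop) (hE : ∀ v, ¬ E v v)
    (h : IsAcyclification E E') :
    IMsigma E = IMsigma E' ∧ IMsigma E' = IMd E' ∧
    ∀ A B C : Set V,
      (SigmaSep E A B C ↔ SigmaSep E' A B C) ∧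
      (SigmaSep E' A B C ↔ DSep E' A B C) :=
  acyclification_independence_models_general E E' h
end

section
/- Every finite directed graph G (possibly containing directed cycles) admits at least one acyclification: there exists an acyclic directed graph G' on the same vertex set satisfying the two defining conditions of an acyclification of G. -/
/-!
Order the vertices lexicographically: first by the preorder "is an ancestor of" on strongly
connected components, then, inside a component, by an arbitrary linear order. This is a strict
order, and every edge the definition of an acyclification forces on `G'` (an edge from `i` into
the component of `j`, turned into `i → j`) as well as every pair inside a component oriented by
the linear order points upwards in it, so `G'` is acyclic.
-/

section Acyclification

variable {V : Type*} (E : V → V → Prop)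

theorem InSC.symm_s3 {E : V → V → Prop} {i j : V} (h : InSC E i j) : InSC E j i :=
  ⟨h.2, h.1⟩

theorem Acyclic.of_le_strictOrder {E : V → V → Prop} (r : V → V → Prop) [IsStrictOrder V r]
    (h : ∀ a b, E a b → r a b) : Acyclic E := fun i hi =>
  irrefl_of r i <| Relation.transGen_eq_self (r := r) ▸ Relation.TransGen.mono h i i hi

def CondensationLexLT [LT V] (a b : V) : Prop :=
  (Anc E a b ∧ ¬ Anc E b a) ∨ (InSC E a b ∧ a < b)

instance [Preorder V] : IsStrictOrder V (CondensationLexLT E) where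
  irrefl a := by rintro (⟨h, hn⟩ | ⟨_, h⟩); exacts [hn h, lt_irrefl a h]
  trans a b c := by
    rintro (⟨hab, hnba⟩ | ⟨⟨hab, hba⟩, hlt⟩) (⟨hbc, hncb⟩ | ⟨⟨hbc, hcb⟩, hlt'⟩)
    · exact Or.inl ⟨hab.trans hbc, fun h => hncb (h.trans hab)⟩
    · exact Or.inl ⟨hab.trans hbc, fun h => hnba (hbc.trans h)⟩
    · exact Or.inl ⟨hab.trans hbc, fun h => hncb (h.trans hab)⟩
    · exact Or.inr ⟨⟨hab.trans hbc, hcb.trans hba⟩, hlt.trans hlt'⟩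

open Classical in
def acyclificationOf [LT V] (i j : V) : Prop :=
  if InSC E i j then i < j else ∃ k, InSC E k j ∧ E i k

theorem condensationLexLT_of_acyclificationOf [LT V] {a b : V} (h : acyclificationOf E a b) :
    CondensationLexLT E a b := by
  unfold acyclificationOf at h
  split_ifs at h with hsc
  · exact Or.inr ⟨hsc, h⟩
  · obtain ⟨k, ⟨hkb, -⟩, hak⟩ := h
    have hab : Anc E a b := (Relation.ReflTransGen.single hak).trans hkb
    exact Or.inl ⟨hab, fun hba => hsc ⟨hab, hba⟩⟩

theorem isAcyclification_acyclificationOf [LinearOrder V] :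
    IsAcyclification E (acyclificationOf E) := by
  refine ⟨Acyclic.of_le_strictOrder (CondensationLexLT E) fun _ _ =>
      condensationLexLT_of_acyclificationOf E,
    fun i j h => by simp only [acyclificationOf, if_neg h], fun i j hij hsc => ?_⟩
  rcases hij.lt_or_gt with h | h
  · exact Or.inl (by simpa only [acyclificationOf, if_pos hsc])
  · exact Or.inr (by simpa only [acyclificationOf, if_pos hsc.symm_s3])

end Acyclification

theorem exists_acyclification_general {V : Type*}
    (E : V → V → Prop) :
    ∃ E' : V → V → Prop, IsAcyclification E E' :=
  letI := IsWellOrder.linearOrder (WellOrderingRel (α := V))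
  ⟨_, isAcyclification_acyclificationOf E⟩

/-- Every finite directed graph (possibly cyclic) admits at least
one acyclification. -/
theorem exists_acyclification {V : Type*} [Fintype V]
    (E : V → V → Prop) (hE : ∀ v, ¬ E v v) :
    ∃ E' : V → V → Prop, IsAcyclification E E' :=
  exists_acyclification_general E
end

section
/- Let G be a finite directed graph (possibly containing directed cycles) and let i, j be two vertices of G. If i is an ancestor of j in G (i ∈ AN_G(j)), then there exists an acyclification G' of G such that i is an ancestor of j in G' (i ∈ AN_{G'}(j)). -/
section Aux
variable {V : Type*} (E : V → V → Prop)

lemma InSC.refl' (x : V) : InSC E x x :=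
  ⟨Relation.ReflTransGen.refl, Relation.ReflTransGen.refl⟩

lemma InSC.symm' {x y : V} (h : InSC E x y) : InSC E y x := ⟨h.2, h.1⟩

lemma InSC.trans' {x y z : V} (h1 : InSC E x y) (h2 : InSC E y z) : InSC E x z :=
  ⟨h1.1.trans h2.1, h2.2.trans h1.2⟩

/-- The setoid of strongly connected components. -/
def scSetoid : Setoid V :=
  ⟨InSC E, ⟨InSC.refl' E, InSC.symm' E, InSC.trans' E⟩⟩

/-- Ancestry descends to the quotient by SCCs. -/
def Qle : Quotient (scSetoid E) → Quotient (scSetoid E) → Prop :=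
  Quotient.lift₂ (fun a b => Anc E a b)
    (fun _ _ _ _ ha hb => propext
      ⟨fun h => ha.2.trans (h.trans hb.1), fun h => ha.1.trans (h.trans hb.2)⟩)

lemma Qle_mk (a b : V) : Qle E ⟦a⟧ ⟦b⟧ = Anc E a b := rfl

instance Qle_partialOrder : IsPartialOrder (Quotient (scSetoid E)) (Qle E) where
  refl q := Quotient.inductionOn q (fun a => Relation.ReflTransGen.refl)
  trans p q r := Quotient.inductionOn₃ p q r
    (fun a b c (h1 : Anc E a b) (h2 : Anc E b c) => h1.trans h2)
  antisymm p q := Quotient.inductionOn₂ p q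
    (fun a b (h1 : Anc E a b) (h2 : Anc E b a) => Quotient.sound ⟨h1, h2⟩)

end Aux

/-- If `i ∈ AN_G(j)` in a finite directed graph `G` (possibly
cyclic), then there exists an acyclification `G'` of `G` with `i ∈ AN_{G'}(j)`. -/
theorem ancestor_exists_acyclification {V : Type*} [Fintype V]
    (E : V → V → Prop) (hE : ∀ v, ¬ E v v) (i j : V) (h : Anc E i j) :
    ∃ E' : V → V → Prop, IsAcyclification E E' ∧ Anc E' i j := by
  classical
  obtain ⟨s, hs, hrs⟩ := extend_partialOrder (Qle E)
  haveI := hs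
  set wo := @WellOrderingRel V with hwo
  -- order inside an SCC: `i` first, then the well-order
  set t : V → V → Prop :=
    fun x y => (x = i ∧ y ≠ i) ∨ (x ≠ i ∧ y ≠ i ∧ wo x y) with ht
  have t_trans : ∀ {x y z}, t x y → t y z → t x z := by
    rintro x y z (⟨hx, hy⟩ | ⟨hx, hy, hxy⟩) (⟨hy', hz⟩ | ⟨hy', hz, hyz⟩)
    · exact absurd hy' hy
    · exact Or.inl ⟨hx, hz⟩
    · exact absurd hy' hy
    · exact Or.inr ⟨hx, hz, _root_.trans hxy hyz⟩
  have t_irrefl : ∀ x, ¬ t x x := by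
    rintro x (⟨hx, hx'⟩ | ⟨hx, hx', hxx⟩)
    · exact hx' hx
    · exact irrefl x hxx
  set E' : V → V → Prop := fun x y =>
    (¬ InSC E x y ∧ ∃ k, InSC E k y ∧ E x k) ∨ (InSC E x y ∧ x ≠ y ∧ t x y)
    with hE'
  have keyQ : ∀ {x y : V}, ¬ InSC E x y → (⟦x⟧ : Quotient (scSetoid E)) ≠ ⟦y⟧ := by
    intro x y hns hq
    exact hns (Quotient.exact hq)
  -- the strict order dominating E'
  set P : V → V → Prop := fun x y =>
    (¬ InSC E x y ∧ s ⟦x⟧ ⟦y⟧) ∨ (InSC E x y ∧ x ≠ y ∧ t x y) with hP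
  have P_irrefl : ∀ x, ¬ P x x := by
    rintro x (⟨hns, _⟩ | ⟨_, hx, _⟩)
    · exact hns (InSC.refl' E x)
    · exact hx rfl
  have P_trans : ∀ {x y z}, P x y → P y z → P x z := by
    rintro x y z (⟨hxy, sxy⟩ | ⟨hxy, hne, txy⟩) (⟨hyz, syz⟩ | ⟨hyz, hne', tyz⟩)
    · left
      refine ⟨fun hxz => ?_, hs.trans _ _ _ sxy syz⟩
      have : (⟦x⟧ : Quotient (scSetoid E)) = ⟦z⟧ := Quotient.sound hxz
      exact hxy (Quotient.exact (hs.toIsPartialOrder.antisymm _ _ sxy (this ▸ syz)))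
    · left
      have hq : (⟦y⟧ : Quotient (scSetoid E)) = ⟦z⟧ := Quotient.sound hyz
      exact ⟨fun hxz => hxy (InSC.trans' E hxz (InSC.symm' E hyz)), hq ▸ sxy⟩
    · left
      have hq : (⟦x⟧ : Quotient (scSetoid E)) = ⟦y⟧ := Quotient.sound hxy
      exact ⟨fun hxz => hyz (InSC.trans' E (InSC.symm' E hxy) hxz), hq ▸ syz⟩
    · right
      have txz := t_trans txy tyz
      exact ⟨InSC.trans' E hxy hyz, fun h => t_irrefl z (h ▸ txz), txz⟩
  have E'_sub_P : ∀ {x y}, E' x y → P x y := by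
    rintro x y (⟨hns, k, hk, hek⟩ | h)
    · left
      refine ⟨hns, hrs _ _ ?_⟩
      show Qle E ⟦x⟧ ⟦y⟧
      exact Relation.ReflTransGen.head hek hk.1
    · exact Or.inr h
  refine ⟨E', ⟨?_, ?_, ?_⟩, ?_⟩
  · -- acyclicity
    intro x hx
    have : ∀ {a b}, Relation.TransGen E' a b → P a b := by
      intro a b hab
      induction hab with
      | single h => exact E'_sub_P h
      | tail _ h ih => exact P_trans ih (E'_sub_P h)
    exact P_irrefl x (this hx)
  · -- condition (a)
    intro x y hns
    constructor
    · rintro (⟨_, hex⟩ | ⟨hsc, _, _⟩)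
      · exact hex
      · exact absurd hsc hns
    · exact fun hex => Or.inl ⟨hns, hex⟩
  · -- condition (b)
    intro x y hxy hsc
    by_cases hxi : x = i
    · exact Or.inl (Or.inr ⟨hsc, hxy, Or.inl ⟨hxi, fun h => hxy (hxi.trans h.symm)⟩⟩)
    by_cases hyi : y = i
    · exact Or.inr (Or.inr ⟨InSC.symm' E hsc, Ne.symm hxy,
        Or.inl ⟨hyi, fun h => hxy (h.trans hyi.symm)⟩⟩)
    rcases trichotomous_of wo x y with hw | hw | hw
    · exact Or.inl (Or.inr ⟨hsc, hxy, Or.inr ⟨hxi, hyi, hw⟩⟩)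
    · exact absurd hw hxy
    · exact Or.inr (Or.inr ⟨InSC.symm' E hsc, Ne.symm hxy, Or.inr ⟨hyi, hxi, hw⟩⟩)
  · -- ancestry of j from i in E'
    have main : ∀ y' : V, InSC E y' j → Anc E' i y' := by
      induction h with
      | refl =>
        intro y' hy'
        by_cases hyi : y' = i
        · exact hyi ▸ Relation.ReflTransGen.refl
        · exact Relation.ReflTransGen.single
            (Or.inr ⟨InSC.symm' E hy', Ne.symm hyi, Or.inl ⟨rfl, hyi⟩⟩)
      | @tail b c hib hbc ih =>
        intro y' hy'
        by_cases hsc : InSC E b c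
        · exact ih y' (InSC.trans' E hy' (InSC.symm' E hsc))
        · have hib' : Anc E' i b := ih b (InSC.refl' E b)
          have : E' b y' := by
            left
            refine ⟨fun hby' => hsc (InSC.trans' E hby' hy'), c, InSC.symm' E hy', hbc⟩
          exact hib'.tail this
    exact main j (InSC.refl' E j)
end

section
/- Let G be a finite directed graph (possibly containing directed cycles) and let i, j be two vertices of G. If i is not an ancestor of j in G (i ∉ AN_G(j)), then i is not an ancestor of j in any acyclification G' of G (i ∉ AN_{G'}(j) for all acyclifications G'). Equivalently, AN_{G'}(j) ⊆ AN_G(j) for every acyclification G' of G and every vertex j. -/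
/-- If `i ∉ AN_G(j)` in a finite directed graph `G` (possibly
cyclic), then `i ∉ AN_{G'}(j)` for every acyclification `G'` of `G`;
equivalently `AN_{G'}(j) ⊆ AN_G(j)` for every acyclification `G'` and vertex `j`. -/
theorem not_ancestor_all_acyclifications {V : Type*} [Fintype V]
    (E : V → V → Prop) (hE : ∀ v, ¬ E v v) :
    (∀ i j : V, ¬ Anc E i j →
      ∀ E' : V → V → Prop, IsAcyclification E E' → ¬ Anc E' i j) ∧
    (∀ E' : V → V → Prop, IsAcyclification E E' →
      ∀ j : V, {i | Anc E' i j} ⊆ {i | Anc E i j}) := by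
  have key : ∀ E' : V → V → Prop, IsAcyclification E E' →
      ∀ i j : V, Anc E' i j → Anc E i j := by
    intro E' hA i j h
    induction h with
    | refl => exact Relation.ReflTransGen.refl
    | tail hij hedge ih =>
      rename_i b c
      refine ih.trans ?_
      by_cases hsc : InSC E b c
      · exact hsc.1
      · obtain ⟨k, hk, hbk⟩ := (hA.2.1 b c hsc).mp hedge
        exact (Relation.ReflTransGen.single hbk).trans hk.1
  exact ⟨fun i j hn E' hA h => hn (key E' hA i j h),
    fun E' hA j i hi => key E' hA i j hi⟩
end

section
/- Let G1 and G2 be finite directed graphs (possibly containing directed cycles) on the same vertex set, and let G1' and G2' be any acyclifications of G1 and G2 respectively. Then G1 and G2 are σ-Markov equivalent (IM_σ(G1) = IM_σ(G2)) if and only if G1' and G2' are d-Markov equivalent (IM_d(G1') = IM_d(G2')). -/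
namespace AcyHelp

variable {V : Type*}

lemma insc_refl (E : V → V → Prop) (x : V) : InSC E x x := ⟨.refl, .refl⟩

lemma insc_symm {E : V → V → Prop} {x y : V} (h : InSC E x y) : InSC E y x := ⟨h.2, h.1⟩

lemma insc_trans {E : V → V → Prop} {x y z : V} (h : InSC E x y) (h' : InSC E y z) :
    InSC E x z := ⟨h.1.trans h'.1, h'.2.trans h.2⟩

/-- From an `E`-edge `u → w` that crosses SCCs, there is an `E'`-edge from `u` to
every vertex of the SCC of `w`. -/
lemma cross_edge {E E' : V → V → Prop} (h : IsAcyclification E E') {u w s : V}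
    (hE : E u w) (hn : ¬ InSC E u w) (hs : InSC E s w) : E' u s := by
  refine (h.2.1 u s fun hc => hn (insc_trans hc hs)).mpr ⟨w, insc_symm hs, hE⟩

lemma anc_of_edge' {E E' : V → V → Prop} (h : IsAcyclification E E') {i j : V}
    (hij : E' i j) : Anc E i j := by
  by_cases hc : InSC E i j
  · exact hc.1
  · obtain ⟨k, hk, hik⟩ := (h.2.1 i j hc).mp hij
    exact (Relation.ReflTransGen.single hik).trans hk.1

lemma anc_mono {E E' : V → V → Prop} (h : IsAcyclification E E') {i j : V}
    (hij : Anc E' i j) : Anc E i j := by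
  induction hij with
  | refl => exact .refl
  | tail _ h2 ih => exact ih.trans (anc_of_edge' h h2)

lemma ancset_mono {E E' : V → V → Prop} (h : IsAcyclification E E') {C : Set V} {x : V}
    (hx : AncOfSet E' C x) : AncOfSet E C x := by
  obtain ⟨c, hc, hanc⟩ := hx
  exact ⟨c, hc, anc_mono h hanc⟩

/-- If `c` is a `G`-ancestor of `C`, then some vertex in the SCC of `c` is a
`G'`-ancestor of `C`. -/
lemma anc_lemma {E E' : V → V → Prop} (h : IsAcyclification E E') {C : Set V} {c : V}
    (hc : AncOfSet E C c) : ∃ s, InSC E s c ∧ AncOfSet E' C s := by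
  obtain ⟨x, hxC, hanc⟩ := hc
  unfold Anc at hanc
  induction hanc using Relation.ReflTransGen.head_induction_on with
  | refl => exact ⟨x, insc_refl E x, x, hxC, .refl⟩
  | @head c w hcw hwx ih =>
      obtain ⟨s, hs, hsanc⟩ := ih
      by_cases hwc : InSC E w c
      · exact ⟨s, insc_trans hs hwc, hsanc⟩
      · refine ⟨c, insc_refl E c, ?_⟩
        have hcs : E' c s := by
          refine (h.2.1 c s fun hcon => hwc ?_).mpr ⟨w, insc_symm hs, hcw⟩
          exact insc_symm (insc_trans hcon hs)
        obtain ⟨z, hz, hza⟩ := hsanc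
        exact ⟨z, hz, (Relation.ReflTransGen.single hcs).trans hza⟩

/-- `E'` has no self-loops. -/
lemma irrefl' {E E' : V → V → Prop} (h : IsAcyclification E E') (x : V) : ¬ E' x x :=
  fun hx => h.1 x (Relation.TransGen.single hx)

end AcyHelp
namespace AcyHelp

variable {V : Type*}

/-- Validity of a list walk: start vertex `a`, steps `(d, x)`. -/
def Valid (E : V → V → Prop) : V → List (Bool × V) → Prop
  | _, [] => True
  | a, (d, x) :: l => (d = true → E a x) ∧ (d = false → E x a) ∧ Valid E x l

/-- Final vertex of a list walk. -/
def endv : V → List (Bool × V) → V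
  | a, [] => a
  | _, (_, x) :: l => endv x l

/-- All interior vertices satisfy the node condition `Ok prev d1 x d2 next`. -/
def IntOk (Ok : V → Bool → V → Bool → V → Prop) : V → List (Bool × V) → Prop
  | _, [] => True
  | _, [_] => True
  | a, (d1, x) :: (d2, y) :: l => Ok a d1 x d2 y ∧ IntOk Ok x ((d2, y) :: l)

@[simp] lemma valid_nil (E : V → V → Prop) (a : V) : Valid E a [] := trivial

@[simp] lemma valid_cons (E : V → V → Prop) (a : V) (d : Bool) (x : V) (l : List (Bool × V)) :
    Valid E a ((d, x) :: l) ↔ (d = true → E a x) ∧ (d = false → E x a) ∧ Valid E x l :=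
  Iff.rfl

@[simp] lemma endv_nil (a : V) : endv a ([] : List (Bool × V)) = a := rfl

@[simp] lemma endv_cons (a : V) (d : Bool) (x : V) (l : List (Bool × V)) :
    endv a ((d, x) :: l) = endv x l := rfl

@[simp] lemma intok_nil (Ok : V → Bool → V → Bool → V → Prop) (a : V) :
    IntOk Ok a [] := trivial

@[simp] lemma intok_single (Ok : V → Bool → V → Bool → V → Prop) (a : V) (p : Bool × V) :
    IntOk Ok a [p] := trivial

@[simp] lemma intok_cons₂ (Ok : V → Bool → V → Bool → V → Prop) (a : V) (d1 : Bool) (x : V)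
    (d2 : Bool) (y : V) (l : List (Bool × V)) :
    IntOk Ok a ((d1, x) :: (d2, y) :: l) ↔ Ok a d1 x d2 y ∧ IntOk Ok x ((d2, y) :: l) :=
  Iff.rfl

lemma endv_append (a : V) (l1 l2 : List (Bool × V)) :
    endv a (l1 ++ l2) = endv (endv a l1) l2 := by
  induction l1 generalizing a with
  | nil => rfl
  | cons p t ih => cases p; simp [endv, ih]

lemma valid_append {E : V → V → Prop} {a : V} {l1 l2 : List (Bool × V)}
    (h1 : Valid E a l1) (h2 : Valid E (endv a l1) l2) : Valid E a (l1 ++ l2) := by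
  induction l1 generalizing a with
  | nil => simpa using h2
  | cons p t ih =>
      cases p
      exact ⟨h1.1, h1.2.1, ih h1.2.2 h2⟩

lemma intok_cons {Ok : V → Bool → V → Bool → V → Prop} {a : V} {d1 : Bool} {x : V}
    {l : List (Bool × V)}
    (h : ∀ d2 y r, l = (d2, y) :: r → Ok a d1 x d2 y)
    (h2 : IntOk Ok x l) : IntOk Ok a ((d1, x) :: l) := by
  cases l with
  | nil => trivial
  | cons p r => cases p with | mk d2 y => exact ⟨h d2 y r rfl, h2⟩

/-- second-to-last vertex of the walk `a, x, (snds of l)`. -/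
def penult : V → V → List (Bool × V) → V
  | a, _, [] => a
  | _, x, (_, z) :: r => penult x z r

/-- last direction of the walk with first step dir `d` then steps `l`. -/
def lastd : Bool → List (Bool × V) → Bool
  | d, [] => d
  | _, (d', _) :: r => lastd d' r

lemma lastd_const {d0 : Bool} : ∀ l : List (Bool × V), (∀ p ∈ l, p.1 = d0) →
    lastd d0 l = d0
  | [], _ => rfl
  | (d', x) :: r, h => by
      have : d' = d0 := h (d', x) (by simp)
      subst this
      exact lastd_const r fun p hp => h p (by simp [hp])

lemma intok_snoc {Ok : V → Bool → V → Bool → V → Prop} :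
    ∀ (l : List (Bool × V)) (a : V) (d : Bool) (x : V) (d2 : Bool) (y : V),
    IntOk Ok a ((d, x) :: l) →
    Ok (penult a x l) (lastd d l) (endv x l) d2 y →
    IntOk Ok a (((d, x) :: l) ++ [(d2, y)])
  | [], a, d, x, d2, y, _, h2 => ⟨h2, trivial⟩
  | (d3, z) :: r, a, d, x, d2, y, h1, h2 =>
      ⟨h1.1, intok_snoc r x d3 z d2 y h1.2 h2⟩

lemma intok_append {Ok : V → Bool → V → Bool → V → Prop} :
    ∀ (l1 : List (Bool × V)) (a : V) (d2 : Bool) (y : V) (r : List (Bool × V)),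
    IntOk Ok a (l1 ++ [(d2, y)]) →
    IntOk Ok (endv a l1) ((d2, y) :: r) →
    IntOk Ok a (l1 ++ (d2, y) :: r)
  | [], a, d2, y, r, _, h2 => h2
  | [(d, x)], a, d2, y, r, h1, h2 => by
      refine ⟨h1.1, ?_⟩
      simpa using h2
  | (d, x) :: (d3, z) :: t, a, d2, y, r, h1, h2 => by
      refine ⟨h1.1, ?_⟩
      exact intok_append ((d3, z) :: t) x d2 y r h1.2 (by simpa [endv] using h2)

end AcyHelp
namespace AcyHelp

variable {V : Type*}

/-- The "bad node" condition for σ-separation, matching `SigmaBlocked`. -/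
def BadS (E : V → V → Prop) (C : Set V) (pv : V) (d1 : Bool) (x : V) (d2 : Bool) (y : V) :
    Prop :=
  (d1 = true ∧ d2 = false ∧ ¬ AncOfSet E C x) ∨
  (x ∈ C ∧
    ((d1 = true ∧ d2 = true ∧ ¬ InSC E y x) ∨
     (d1 = false ∧ d2 = false ∧ ¬ InSC E pv x) ∨
     (d1 = false ∧ d2 = true ∧ (¬ InSC E pv x ∨ ¬ InSC E y x))))

/-- The "bad node" condition for d-separation, matching `DBlocked`. -/
def BadD (E' : V → V → Prop) (C : Set V) (_pv : V) (d1 : Bool) (x : V) (d2 : Bool) (_y : V) :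
    Prop :=
  ((d1 = true ∧ d2 = false) ∧ ¬ AncOfSet E' C x) ∨
  (¬ (d1 = true ∧ d2 = false) ∧ x ∈ C)

/-- node-Ok conditions -/
def SOk (E : V → V → Prop) (C : Set V) (pv : V) (d1 : Bool) (x : V) (d2 : Bool) (y : V) :
    Prop := ¬ BadS E C pv d1 x d2 y

def DOk (E' : V → V → Prop) (C : Set V) (pv : V) (d1 : Bool) (x : V) (d2 : Bool) (y : V) :
    Prop := ¬ BadD E' C pv d1 x d2 y

variable {E E' : V → V → Prop} {C : Set V}

lemma sok_collider {pv : V} {x : V} {y : V} (h : SOk E C pv true x false y) :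
    AncOfSet E C x := by
  by_contra hc
  exact h (Or.inl ⟨rfl, rfl, hc⟩)

lemma sok_notC_of_out {pv x y : V} {d1 : Bool} (h : SOk E C pv d1 x true y)
    (hy : ¬ InSC E y x) : x ∉ C := by
  intro hxC
  cases d1 with
  | true => exact h (Or.inr ⟨hxC, Or.inl ⟨rfl, rfl, hy⟩⟩)
  | false => exact h (Or.inr ⟨hxC, Or.inr (Or.inr ⟨rfl, rfl, Or.inr hy⟩)⟩)

lemma sok_notC_of_in {pv x y : V} {d2 : Bool} (h : SOk E C pv false x d2 y)
    (hp : ¬ InSC E pv x) : x ∉ C := by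
  intro hxC
  cases d2 with
  | false => exact h (Or.inr ⟨hxC, Or.inr (Or.inl ⟨rfl, rfl, hp⟩)⟩)
  | true => exact h (Or.inr ⟨hxC, Or.inr (Or.inr ⟨rfl, rfl, Or.inl hp⟩)⟩)

lemma dok_noncollider {pv x y : V} {d1 d2 : Bool} (h : ¬ (d1 = true ∧ d2 = false))
    (hx : x ∉ C) : DOk E' C pv d1 x d2 y := by
  rintro (⟨hc, _⟩ | ⟨_, hxC⟩)
  · exact h hc
  · exact hx hxC

lemma dok_collider {pv x y : V} (h : AncOfSet E' C x) :
    DOk E' C pv true x false y := by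
  rintro (⟨_, hc⟩ | ⟨hc, _⟩)
  · exact hc h
  · exact hc ⟨rfl, rfl⟩

/-- σOk at a junction vertex whose status is derived from a d-side condition:
holds for arbitrary previous and next vertices. -/
lemma sok_of_dside {pv x y : V} {d1 d2 : Bool}
    (h1 : d1 = true → d2 = false → AncOfSet E C x)
    (h2 : ¬ (d1 = true ∧ d2 = false) → x ∉ C) :
    SOk E C pv d1 x d2 y := by
  rintro (⟨ha, hb, hc⟩ | ⟨hxC, hcase⟩)
  · exact hc (h1 ha hb)
  · rcases hcase with ⟨ha, hb, _⟩ | ⟨ha, hb, _⟩ | ⟨ha, hb, _⟩ <;>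
      exact h2 (by simp [ha, hb]) hxC

end AcyHelp
namespace AcyHelp

variable {V : Type*} {E E' : V → V → Prop} {C : Set V}

/-- A directed `E`-path from `s` to `t`, as a list walk with all directions `true`. -/
lemma trueSeg {s t : V} (h : Anc E s t) :
    ∃ l : List (Bool × V), Valid E s l ∧ endv s l = t ∧ (l = [] → s = t) ∧
      (∀ p ∈ l, p.1 = true ∧ Anc E s p.2 ∧ Anc E p.2 t) := by
  unfold Anc at h
  induction h using Relation.ReflTransGen.head_induction_on with
  | refl => exact ⟨[], trivial, rfl, fun _ => rfl, by simp⟩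
  | @head s b hsb hbt ih =>
      obtain ⟨l, hval, hend, _, hmem⟩ := ih
      refine ⟨(true, b) :: l, ⟨fun _ => hsb, by simp, hval⟩, by simpa using hend,
        by simp, ?_⟩
      rintro p hp
      rcases List.mem_cons.mp hp with rfl | hp
      · exact ⟨rfl, Relation.ReflTransGen.single hsb, hbt⟩
      · obtain ⟨h1, h2, h3⟩ := hmem p hp
        exact ⟨h1, (Relation.ReflTransGen.single hsb).trans h2, h3⟩

/-- A reversed directed `E`-path: a list walk from `s` to `t` with all directions
`false`, realizing a directed path from `t` to `s`. -/
lemma falseSeg {t s : V} (h : Anc E t s) :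
    ∃ l : List (Bool × V), Valid E s l ∧ endv s l = t ∧ (l = [] → s = t) ∧
      (∀ p ∈ l, p.1 = false ∧ Anc E t p.2 ∧ Anc E p.2 s) := by
  unfold Anc at h
  induction h with
  | refl => exact ⟨[], trivial, rfl, fun _ => rfl, by simp⟩
  | @tail b c htb hbc ih =>
      obtain ⟨l, hval, hend, _, hmem⟩ := ih
      refine ⟨(false, b) :: l, ⟨by simp, fun _ => hbc, hval⟩, by simpa using hend,
        by simp, ?_⟩
      rintro p hp
      rcases List.mem_cons.mp hp with rfl | hp
      · exact ⟨rfl, htb, Relation.ReflTransGen.single hbc⟩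
      · obtain ⟨h1, h2, h3⟩ := hmem p hp
        exact ⟨h1, h2, h3.trans (Relation.ReflTransGen.single hbc)⟩

/-- Interior conditions hold on an all-`true` segment whose vertices stay in one SCC. -/
lemma intok_alltrue {z : V} :
    ∀ (l : List (Bool × V)) (a : V), (∀ p ∈ l, p.1 = true ∧ InSC E p.2 z) →
      IntOk (SOk E C) a l
  | [], _, _ => trivial
  | [_], _, _ => trivial
  | (d1, x) :: (d2, y) :: r, a, h => by
      obtain ⟨hd1, hx⟩ := h (d1, x) (by simp)
      obtain ⟨hd2, hy⟩ := h (d2, y) (by simp)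
      subst hd1; subst hd2
      refine ⟨?_, intok_alltrue ((true, y) :: r) x fun p hp => h p (by simp [hp])⟩
      rintro (⟨_, hb, _⟩ | ⟨_, (⟨_, _, hc⟩ | ⟨hc, _, _⟩ | ⟨hc, _, _⟩)⟩)
      · cases hb
      · exact hc (insc_trans hy (insc_symm hx))
      · cases hc
      · cases hc

/-- Interior conditions hold on an all-`false` segment: all vertices except
possibly the last stay in the SCC of `z`, and the anchor is in the SCC of `z`. -/
lemma intok_allfalse {z : V} :
    ∀ (l : List (Bool × V)) (a : V), InSC E a z → (∀ p ∈ l, p.1 = false) →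
      (∀ p ∈ l.dropLast, InSC E p.2 z) →
      IntOk (SOk E C) a l
  | [], _, _, _, _ => trivial
  | [_], _, _, _, _ => trivial
  | (d1, x) :: (d2, y) :: r, a, ha, hd, hmem => by
      have hd1 : d1 = false := hd (d1, x) (by simp)
      have hd2 : d2 = false := hd (d2, y) (by simp)
      subst hd1; subst hd2
      have hx : InSC E x z := by
        have : (false, x) ∈ ((false, x) :: (false, y) :: r).dropLast := by
          simp [List.dropLast]
        exact hmem _ this
      refine ⟨?_, intok_allfalse ((false, y) :: r) x hx
        (fun p hp => hd p (by simp [hp])) (fun p hp => hmem p ?_)⟩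
      · rintro (⟨hb, _, _⟩ | ⟨_, (⟨hb, _, _⟩ | ⟨_, _, hc⟩ | ⟨_, hb, _⟩)⟩)
        · cases hb
        · cases hb
        · exact hc (insc_trans ha (insc_symm hx))
        · cases hb
      · simp only [List.dropLast] at hp ⊢
        right
        exact hp

end AcyHelp
namespace AcyHelp

variable {V : Type*} {E E' : V → V → Prop} {C : Set V}

/-- Replacement of a single `E'`-walk-step (from `s` to `x`, direction `d`) by a
list walk in `E` from `s` to `x` with all directions `d`, whose interior
conditions for σ-separation hold (anchored at `s`). -/
lemma seg_of_edge (h : IsAcyclification E E') (s x : V) (d : Bool)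
    (he : d = true → E' s x) (he' : d = false → E' x s) :
    ∃ l : List (Bool × V), l ≠ [] ∧ Valid E s l ∧ endv s l = x ∧
      (∀ p ∈ l, p.1 = d) ∧ IntOk (SOk E C) s l := by
  cases d with
  | true =>
      have hsx : E' s x := he rfl
      by_cases hc : InSC E s x
      · obtain ⟨l, hval, hend, hnil, hmem⟩ := trueSeg (E := E) hc.1
        have hne : l ≠ [] := by
          intro hl
          have := hnil hl
          subst this
          exact irrefl' h s hsx
        refine ⟨l, hne, hval, hend, fun p hp => (hmem p hp).1, ?_⟩
        refine intok_alltrue (z := x) l s fun p hp => ?_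
        obtain ⟨h1, h2, h3⟩ := hmem p hp
        exact ⟨h1, h3, hc.2.trans h2⟩
      · obtain ⟨k, hk, hek⟩ := (h.2.1 s x hc).mp hsx
        obtain ⟨l, hval, hend, _, hmem⟩ := trueSeg (E := E) hk.1
        refine ⟨(true, k) :: l, by simp, ⟨fun _ => hek, by simp, hval⟩,
          by simpa using hend, ?_, ?_⟩
        · rintro p hp
          rcases List.mem_cons.mp hp with rfl | hp
          · rfl
          · exact (hmem p hp).1
        · refine intok_alltrue (z := x) _ s fun p hp => ?_
          rcases List.mem_cons.mp hp with rfl | hp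
          · exact ⟨rfl, hk⟩
          · obtain ⟨h1, h2, h3⟩ := hmem p hp
            exact ⟨h1, h3, hk.2.trans h2⟩
  | false =>
      have hxs : E' x s := he' rfl
      by_cases hc : InSC E x s
      · obtain ⟨l, hval, hend, hnil, hmem⟩ := falseSeg (E := E) hc.1
        have hne : l ≠ [] := by
          intro hl
          have := hnil hl
          subst this
          exact irrefl' h s hxs
        refine ⟨l, hne, hval, hend, fun p hp => (hmem p hp).1, ?_⟩
        refine intok_allfalse (z := s) l s (insc_refl E s)
          (fun p hp => (hmem p hp).1) fun p hp => ?_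
        obtain ⟨_, h2, h3⟩ := hmem p (List.dropLast_subset l hp)
        exact ⟨h3, hc.2.trans h2⟩
      · obtain ⟨k, hk, hek⟩ := (h.2.1 x s hc).mp hxs
        -- walk: s ← ... ← k ← x
        obtain ⟨l, hval, hend, _, hmem⟩ := falseSeg (E := E) hk.1
        refine ⟨l ++ [(false, x)], by simp, ?_, ?_, ?_, ?_⟩
        · refine valid_append hval ?_
          rw [hend]
          exact ⟨by simp, fun _ => hek, trivial⟩
        · rw [endv_append, hend]; rfl
        · rintro p hp
          rcases List.mem_append.mp hp with hp | hp
          · exact (hmem p hp).1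
          · simp at hp; rw [hp]
        · -- interior conditions: all vertices of l are in SC(s)
          refine intok_allfalse (z := s) _ s (insc_refl E s) ?_ ?_
          · rintro p hp
            rcases List.mem_append.mp hp with hp | hp
            · exact (hmem p hp).1
            · simp at hp; rw [hp]
          · rintro p hp
            rw [List.dropLast_concat] at hp
            obtain ⟨_, h2, h3⟩ := hmem p hp
            exact ⟨h3, hk.2.trans h2⟩
end AcyHelp
namespace AcyHelp

variable {V : Type*} {E E' : V → V → Prop} {C : Set V}

/-- Main translation, direction 2: a d-open walk in the acyclification `E'`
translates into a σ-open walk in `E` with the same endpoints. -/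
lemma L2rec (h : IsAcyclification E E') :
    ∀ (steps : List (Bool × V)) (w : V), Valid E' w steps → IntOk (DOk E' C) w steps →
    ∃ out : List (Bool × V), Valid E w out ∧ endv w out = endv w steps ∧
      IntOk (SOk E C) w out ∧
      (steps = [] → out = []) ∧
      (∀ db xb t, steps = (db, xb) :: t → ∃ v1 t1, out = (db, v1) :: t1)
  | [], w, _, _ => ⟨[], trivial, rfl, trivial, fun _ => rfl, by simp⟩
  | (d1, x) :: rest, w, hval, hint => by
      obtain ⟨seg, hne, hsval, hsend, hsdirs, hsint⟩ :=
        seg_of_edge (C := C) h w x d1 hval.1 hval.2.1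
      obtain ⟨v1, segt, rfl⟩ : ∃ v1 segt, seg = (d1, v1) :: segt := by
        obtain ⟨⟨dv, v1⟩, t, rfl⟩ := List.exists_cons_of_ne_nil hne
        have hdv : dv = d1 := hsdirs (dv, v1) (by simp)
        exact ⟨v1, t, by rw [hdv]⟩
      cases rest with
      | nil =>
          refine ⟨(d1, v1) :: segt, hsval, hsend, hsint, by simp,
            fun db xb t hst => ?_⟩
          injection hst with h1 h2
          injection h1 with h1a h1b
          subst h1a
          exact ⟨v1, segt, rfl⟩
      | cons p r =>
          obtain ⟨d2, y⟩ := p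
          have hx : DOk E' C w d1 x d2 y := hint.1
          obtain ⟨recOut, hrval, hrend, hrint, _, hrhead⟩ :=
            L2rec h ((d2, y) :: r) x hval.2.2 hint.2
          obtain ⟨u1, t1, rfl⟩ := hrhead d2 y r rfl
          refine ⟨((d1, v1) :: segt) ++ ((d2, u1) :: t1), ?_, ?_, ?_, by simp,
            fun db xb t hst => ?_⟩
          · refine valid_append hsval ?_
            rw [hsend]; exact hrval
          · rw [endv_append, hsend]
            simpa using hrend
          · refine intok_append _ w d2 u1 t1 ?_ ?_
            · refine intok_snoc segt w d1 v1 d2 u1 hsint ?_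
              have hlast : lastd d1 segt = d1 :=
                lastd_const segt fun p hp => hsdirs p (by simp [hp])
              have hend2 : endv v1 segt = x := by simpa using hsend
              rw [hlast, hend2]
              refine sok_of_dside ?_ ?_
              · intro ha hb
                refine ancset_mono h ?_
                by_contra hc
                exact hx (Or.inl ⟨⟨ha, hb⟩, hc⟩)
              · intro hnc hxC
                exact hx (Or.inr ⟨hnc, hxC⟩)
            · rw [hsend]
              exact hrint
          · injection hst with h1 h2
            injection h1 with h1a h1b
            subst h1a
            exact ⟨v1, segt ++ (d2, u1) :: t1, by simp⟩

end AcyHelp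
namespace AcyHelp

variable {V : Type*} {E E' : V → V → Prop} {C : Set V}

/-- Terminal case of the main translation: empty remainder. -/
lemma L1term (h : IsAcyclification E E') (w p : V) (am : Bool)
    (hA : am = true → (∀ s, InSC E s w → E' p s))
    (hB : am = false → ∃ we, InSC E we w ∧ we ∉ C ∧ E' we p) :
    ∃ out : List (Bool × V), Valid E' p out ∧ endv p out = w ∧
      IntOk (DOk E' C) p out ∧ (∃ v1 t1, out = (am, v1) :: t1) := by
  cases am with
  | true =>
      exact ⟨[(true, w)], ⟨fun _ => hA rfl w (insc_refl E w), by simp, trivial⟩,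
        rfl, trivial, w, [], rfl⟩
  | false =>
      obtain ⟨we, h1, h2, h3⟩ := hB rfl
      by_cases hw : we = w
      · subst hw
        exact ⟨[(false, we)], ⟨by simp, fun _ => h3, trivial⟩, rfl, trivial, we, [], rfl⟩
      · rcases h.2.2 we w hw h1 with hew | hwe
        · refine ⟨[(false, we), (true, w)],
            ⟨by simp, fun _ => h3, fun _ => hew, by simp, trivial⟩, rfl,
            ⟨dok_noncollider (by simp) h2, trivial⟩, we, _, rfl⟩
        · refine ⟨[(false, we), (false, w)],
            ⟨by simp, fun _ => h3, by simp, fun _ => hwe, trivial⟩, rfl,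
            ⟨dok_noncollider (by simp) h2, trivial⟩, we, _, rfl⟩

/-- Main translation, direction 1 (run processing): a σ-open walk remainder in `E`
translates into a d-open walk remainder in the acyclification `E'`. -/
lemma L1rec (h : IsAcyclification E E') :
    ∀ (n : ℕ) (steps : List (Bool × V)), steps.length ≤ n →
    ∀ (w pv p : V) (dl : Bool) (am : Bool),
    Valid E w steps →
    IntOk (SOk E C) pv ((dl, w) :: steps) →
    endv w steps ∉ C →
    (am = true → (∀ s, InSC E s w → E' p s) ∧
      (dl = false → ∃ s, InSC E s w ∧ AncOfSet E' C s)) →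
    (am = false → ∃ we, InSC E we w ∧ we ∉ C ∧ E' we p) →
    ∃ out : List (Bool × V), Valid E' p out ∧ endv p out = endv w steps ∧
      IntOk (DOk E' C) p out ∧ (∃ v1 t1, out = (am, v1) :: t1) := by
  intro n
  induction n with
  | zero =>
      intro steps hlen w pv p dl am hval hσ hend hA hB
      have : steps = [] := List.length_eq_zero_iff.mp (Nat.le_zero.mp hlen)
      subst this
      exact L1term h w p am (fun ham => (hA ham).1) hB
  | succ n ih =>
      intro steps hlen w pv p dl am hval hσ hend hA hB
      cases steps with
      | nil => exact L1term h w p am (fun ham => (hA ham).1) hB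
      | cons q rest =>
          obtain ⟨d2, y⟩ := q
          have hlen' : rest.length ≤ n := by
            simpa using Nat.succ_le_succ_iff.mp (by simpa using hlen)
          have hcond : SOk E C pv dl w d2 y := hσ.1
          have hσ' : IntOk (SOk E C) w ((d2, y) :: rest) := hσ.2
          obtain ⟨he1, he2, hval'⟩ := hval
          have hend' : endv y rest ∉ C := hend
          by_cases hyw : InSC E y w
          · -- same SCC: skip this step
            refine ih rest hlen' y w p d2 am hval' hσ' hend' ?_ ?_
            · intro ham
              obtain ⟨hA1, hA2⟩ := hA ham
              refine ⟨fun s hs => hA1 s (insc_trans hs hyw), fun hd2f => ?_⟩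
              subst hd2f
              cases hdl : dl with
              | true =>
                  obtain ⟨s, hsw, hanc⟩ :=
                    anc_lemma h (sok_collider (hdl ▸ hcond))
                  exact ⟨s, insc_trans hsw (insc_symm hyw), hanc⟩
              | false =>
                  obtain ⟨s, hsw, hanc⟩ := hA2 hdl
                  exact ⟨s, insc_trans hsw (insc_symm hyw), hanc⟩
            · intro ham
              obtain ⟨we, a, b, c⟩ := hB ham
              exact ⟨we, insc_trans a (insc_symm hyw), b, c⟩
          · -- crossing edge
            have hwy : ¬ InSC E w y := fun hc => hyw (insc_symm hc)
            cases d2 with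
            | true =>
                -- edge leaves the current run:  w → y
                have hEwy : E w y := he1 rfl
                have hwC : w ∉ C := sok_notC_of_out hcond hyw
                obtain ⟨recOut, hrv, hre, hri, v1', t1', rfl⟩ :=
                  ih rest hlen' y w w true true hval' hσ' hend'
                    (fun _ => ⟨fun s hs => cross_edge h hEwy hwy hs,
                      fun hf => by cases hf⟩)
                    (fun hf => by cases hf)
                cases am with
                | true =>
                    refine ⟨(true, w) :: (true, v1') :: t1',
                      ⟨fun _ => (hA rfl).1 w (insc_refl E w), by simp, hrv⟩,
                      hre, ⟨dok_noncollider (by simp) hwC, hri⟩, w, _, rfl⟩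
                | false =>
                    obtain ⟨we, hwe1, hwe2, hwe3⟩ := hB rfl
                    by_cases hwwe : we = w
                    · subst hwwe
                      exact ⟨(false, we) :: (true, v1') :: t1',
                        ⟨by simp, fun _ => hwe3, hrv⟩, hre,
                        ⟨dok_noncollider (by simp) hwe2, hri⟩, we, _, rfl⟩
                    · rcases h.2.2 we w hwwe hwe1 with hew | hwe
                      · exact ⟨(false, we) :: (true, w) :: (true, v1') :: t1',
                          ⟨by simp, fun _ => hwe3, fun _ => hew, by simp, hrv⟩, hre,
                          ⟨dok_noncollider (by simp) hwe2,
                           dok_noncollider (by simp) hwC, hri⟩, we, _, rfl⟩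
                      · exact ⟨(false, we) :: (false, w) :: (true, v1') :: t1',
                          ⟨by simp, fun _ => hwe3, by simp, fun _ => hwe, hrv⟩, hre,
                          ⟨dok_noncollider (by simp) hwe2,
                           dok_noncollider (by simp) hwC, hri⟩, we, _, rfl⟩
            | false =>
                -- edge enters the current run:  y → w
                have hEyw : E y w := he2 rfl
                have hyC : y ∉ C := by
                  cases rest with
                  | nil => exact hend
                  | cons q' r' =>
                      obtain ⟨d3, z⟩ := q'
                      exact sok_notC_of_in hσ'.1 hwy
                cases am with
                | true =>
                    obtain ⟨s, hsw, hanc⟩ : ∃ s, InSC E s w ∧ AncOfSet E' C s := by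
                      cases hdl : dl with
                      | true => exact anc_lemma h (sok_collider (hdl ▸ hcond))
                      | false => exact (hA rfl).2 hdl
                    obtain ⟨recOut, hrv, hre, hri, v1', t1', rfl⟩ :=
                      ih rest hlen' y w s false false hval' hσ' hend'
                        (fun hf => by cases hf)
                        (fun _ => ⟨y, insc_refl E y, hyC, cross_edge h hEyw hyw hsw⟩)
                    refine ⟨(true, s) :: (false, v1') :: t1',
                      ⟨fun _ => (hA rfl).1 s hsw, by simp, hrv⟩, hre,
                      ⟨dok_collider hanc, hri⟩, s, _, rfl⟩
                | false =>
                    obtain ⟨we, hwe1, hwe2, hwe3⟩ := hB rfl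
                    obtain ⟨recOut, hrv, hre, hri, v1', t1', rfl⟩ :=
                      ih rest hlen' y w we false false hval' hσ' hend'
                        (fun hf => by cases hf)
                        (fun _ => ⟨y, insc_refl E y, hyC, cross_edge h hEyw hyw hwe1⟩)
                    exact ⟨(false, we) :: (false, v1') :: t1',
                      ⟨by simp, fun _ => hwe3, hrv⟩, hre,
                      ⟨dok_noncollider (by simp) hwe2, hri⟩, we, _, rfl⟩

end AcyHelp
namespace AcyHelp

variable {V : Type*} {E E' : V → V → Prop} {C : Set V}

lemma intok_tail {Ok : V → Bool → V → Bool → V → Prop} {a : V} {d : Bool} {x : V}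
    {l : List (Bool × V)} (h : IntOk Ok a ((d, x) :: l)) : IntOk Ok x l := by
  cases l with
  | nil => trivial
  | cons p r => cases p; exact h.2

/-- Processing of the start run: translation of a σ-open walk into a d-open walk
in the acyclification, preserving the endpoints. -/
lemma L1start (h : IsAcyclification E E') :
    ∀ (n : ℕ) (steps : List (Bool × V)), steps.length ≤ n →
    ∀ (a w : V),
    Valid E w steps →
    IntOk (SOk E C) w steps →
    endv w steps ∉ C →
    InSC E a w →
    (w = a ∨ ∃ pv dl, ∀ d2 y r, steps = (d2, y) :: r → SOk E C pv dl w d2 y) →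
    ∃ out : List (Bool × V), Valid E' a out ∧ endv a out = endv w steps ∧
      IntOk (DOk E' C) a out := by
  intro n
  induction n with
  | zero =>
      intro steps hlen a w hval hσ hend haw _
      have : steps = [] := List.length_eq_zero_iff.mp (Nat.le_zero.mp hlen)
      subst this
      by_cases hwa : a = w
      · exact ⟨[], trivial, hwa, trivial⟩
      · rcases h.2.2 a w hwa haw with haw' | hwa'
        · exact ⟨[(true, w)], ⟨fun _ => haw', by simp, trivial⟩, rfl, trivial⟩
        · exact ⟨[(false, w)], ⟨by simp, fun _ => hwa', trivial⟩, rfl, trivial⟩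
  | succ n ih =>
      intro steps hlen a w hval hσ hend haw Hw
      cases steps with
      | nil =>
          by_cases hwa : a = w
          · exact ⟨[], trivial, hwa, trivial⟩
          · rcases h.2.2 a w hwa haw with haw' | hwa'
            · exact ⟨[(true, w)], ⟨fun _ => haw', by simp, trivial⟩, rfl, trivial⟩
            · exact ⟨[(false, w)], ⟨by simp, fun _ => hwa', trivial⟩, rfl, trivial⟩
      | cons q rest =>
          obtain ⟨d2, y⟩ := q
          have hlen' : rest.length ≤ n := by
            simpa using Nat.succ_le_succ_iff.mp (by simpa using hlen)
          obtain ⟨he1, he2, hval'⟩ := hval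
          have hend' : endv y rest ∉ C := hend
          by_cases hyw : InSC E y w
          · -- same SCC: skip this step
            refine ih rest hlen' a y hval' (intok_tail hσ) hend'
              (insc_trans haw (insc_symm hyw)) ?_
            refine Or.inr ⟨w, d2, fun d3 z r hr => ?_⟩
            subst hr
            exact hσ.1
          · have hwy : ¬ InSC E w y := fun hc => hyw (insc_symm hc)
            cases d2 with
            | true =>
                have hEwy : E w y := he1 rfl
                by_cases hwa : w = a
                · subst hwa
                  obtain ⟨recOut, hrv, hre, hri, _⟩ :=
                    L1rec (C := C) h rest.length rest le_rfl y w w true true hval' hσ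
                      hend'
                      (fun _ => ⟨fun s hs => cross_edge h hEwy hwy hs,
                        fun hf => by cases hf⟩)
                      (fun hf => by cases hf)
                  exact ⟨recOut, hrv, hre, hri⟩
                · have hwC : w ∉ C := by
                    rcases Hw with hl | ⟨pv, dl, hcw⟩
                    · exact absurd hl hwa
                    · exact sok_notC_of_out (hcw true y rest rfl) hyw
                  obtain ⟨recOut, hrv, hre, hri, v1', t1', rfl⟩ :=
                    L1rec (C := C) h rest.length rest le_rfl y w w true true hval' hσ
                      hend'
                      (fun _ => ⟨fun s hs => cross_edge h hEwy hwy hs,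
                        fun hf => by cases hf⟩)
                      (fun hf => by cases hf)
                  rcases h.2.2 a w (fun hc => hwa hc.symm) haw with haw' | hwa'
                  · exact ⟨(true, w) :: (true, v1') :: t1',
                      ⟨fun _ => haw', by simp, hrv⟩, hre,
                      ⟨dok_noncollider (by simp) hwC, hri⟩⟩
                  · exact ⟨(false, w) :: (true, v1') :: t1',
                      ⟨by simp, fun _ => hwa', hrv⟩, hre,
                      ⟨dok_noncollider (by simp) hwC, hri⟩⟩
            | false =>
                have hEyw : E y w := he2 rfl
                have hyC : y ∉ C := by
                  cases rest with
                  | nil => exact hend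
                  | cons q' r' =>
                      obtain ⟨d3, z⟩ := q'
                      exact sok_notC_of_in hσ.1 hwy
                obtain ⟨recOut, hrv, hre, hri, _⟩ :=
                  L1rec (C := C) h rest.length rest le_rfl y w a false false hval' hσ
                    hend'
                    (fun hf => by cases hf)
                    (fun _ => ⟨y, insc_refl E y, hyC, cross_edge h hEyw hyw haw⟩)
                exact ⟨recOut, hrv, hre, hri⟩

end AcyHelp
namespace AcyHelp

variable {V : Type*}

/-- `k`-th vertex of a list walk. -/
def wv : V → List (Bool × V) → ℕ → V
  | a, _, 0 => a
  | a, [], _ + 1 => a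
  | _, (_, x) :: l, k + 1 => wv x l k

/-- `k`-th direction of a list walk. -/
def wd : List (Bool × V) → ℕ → Bool
  | [], _ => true
  | (d, _) :: _, 0 => d
  | (_, _) :: l, k + 1 => wd l k

@[simp] lemma wv_zero (a : V) (l : List (Bool × V)) : wv a l 0 = a := by
  cases l <;> rfl

@[simp] lemma wv_cons_succ (a : V) (d : Bool) (x : V) (l : List (Bool × V)) (k : ℕ) :
    wv a ((d, x) :: l) (k + 1) = wv x l k := rfl

@[simp] lemma wd_cons_succ (d : Bool) (x : V) (l : List (Bool × V)) (k : ℕ) :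
    wd ((d, x) :: l) (k + 1) = wd l k := rfl

lemma endv_eq_wv (a : V) : ∀ l : List (Bool × V), endv a l = wv a l l.length := by
  intro l
  induction l generalizing a with
  | nil => rfl
  | cons p t ih => cases p; simp [endv, ih]

lemma valid_iff_wv (E : V → V → Prop) :
    ∀ (l : List (Bool × V)) (a : V), Valid E a l ↔
      ∀ k, k < l.length →
        (wd l k = true → E (wv a l k) (wv a l (k + 1))) ∧
        (wd l k = false → E (wv a l (k + 1)) (wv a l k)) := by
  intro l
  induction l with
  | nil => simp [Valid]
  | cons p t ih =>
      obtain ⟨d, x⟩ := p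
      intro a
      constructor
      · rintro ⟨h1, h2, h3⟩ k hk
        cases k with
        | zero => exact ⟨fun hd => by simpa [wd, wv] using h1 hd,
            fun hd => by simpa [wd, wv] using h2 hd⟩
        | succ k =>
            have := (ih x).mp h3 k (by simpa using hk)
            simpa using this
      · intro hk
        refine ⟨fun hd => by simpa [wd, wv] using (hk 0 (by simp)).1 hd,
          fun hd => by simpa [wd, wv] using (hk 0 (by simp)).2 hd, ?_⟩
        refine (ih x).mpr fun k hkk => ?_
        have := hk (k + 1) (by simpa using hkk)
        simpa using this

lemma intok_iff_wv {Ok : V → Bool → V → Bool → V → Prop} :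
    ∀ (l : List (Bool × V)) (a : V), IntOk Ok a l ↔
      ∀ k, k + 2 ≤ l.length →
        Ok (wv a l k) (wd l k) (wv a l (k + 1)) (wd l (k + 1)) (wv a l (k + 2)) := by
  intro l
  induction l with
  | nil => simp
  | cons p t ih =>
      obtain ⟨d1, x⟩ := p
      intro a
      cases t with
      | nil => simp
      | cons q r =>
          obtain ⟨d2, y⟩ := q
          constructor
          · rintro ⟨h1, h2⟩ k hk
            cases k with
            | zero => simpa [wv, wd] using h1
            | succ k =>
                have := ((ih x).mp h2) k (by simpa using hk)
                simpa using this
          · intro hk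
            refine ⟨by simpa [wv, wd] using hk 0 (by simp), ?_⟩
            refine (ih x).mpr fun k hkk => ?_
            have := hk (k + 1) (by simpa using hkk)
            simpa using this

end AcyHelp

namespace AcyHelp

variable {V : Type*}

lemma wv_eq_get : ∀ (l : List (Bool × V)) (a : V) (k : ℕ) (h : k < l.length),
    wv a l (k + 1) = (l.get ⟨k, h⟩).2
  | (d, x) :: t, a, 0, _ => by simp [wv]
  | (d, x) :: t, a, k + 1, h => by
      simpa using wv_eq_get t x k (by simpa using h)

lemma wd_eq_get : ∀ (l : List (Bool × V)) (k : ℕ) (h : k < l.length),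
    wd l k = (l.get ⟨k, h⟩).1
  | (d, x) :: t, 0, _ => by simp [wd]
  | (d, x) :: t, k + 1, h => by
      simpa using wd_eq_get t k (by simpa using h)

/-- Generic blocked-walk predicate. -/
def GB {E : V → V → Prop} (C : Set V) (Bad : V → Bool → V → Bool → V → Prop)
    (w : Walk E) : Prop :=
  w.v 0 ∈ C ∨ w.v w.len ∈ C ∨
    ∃ k, 0 < k ∧ k < w.len ∧ Bad (w.v (k - 1)) (w.d (k - 1)) (w.v k) (w.d k) (w.v (k + 1))

lemma sigmablocked_iff (E : V → V → Prop) (C : Set V) (w : Walk E) :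
    SigmaBlocked E C w ↔ GB C (BadS E C) w := by
  unfold SigmaBlocked GB BadS IsCollider
  refine or_congr Iff.rfl (or_congr Iff.rfl (exists_congr fun k => ?_))
  refine and_congr Iff.rfl (and_congr Iff.rfl ?_)
  tauto

lemma dblocked_iff (E : V → V → Prop) (C : Set V) (w : Walk E) :
    DBlocked E C w ↔ GB C (BadD E C) w := by
  unfold DBlocked GB BadD IsCollider
  refine or_congr Iff.rfl (or_congr Iff.rfl (exists_congr fun k => ?_))
  refine and_congr Iff.rfl (and_congr Iff.rfl ?_)
  tauto

/-- From a list walk, build a `Walk` that is not generically blocked. -/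
lemma walk_of_list (E : V → V → Prop) (C : Set V) (Bad : V → Bool → V → Bool → V → Prop)
    (a : V) (l : List (Bool × V)) (hval : Valid E a l)
    (ha : a ∉ C) (hb : endv a l ∉ C)
    (hint : IntOk (fun pv d1 x d2 y => ¬ Bad pv d1 x d2 y) a l) :
    ∃ w : Walk E, w.v 0 = a ∧ w.v w.len = endv a l ∧ ¬ GB C Bad w := by
  refine ⟨⟨l.length, wv a l, wd l, fun k hk => (valid_iff_wv E l a).mp hval k hk⟩,
    by simp, (endv_eq_wv a l).symm, ?_⟩
  rintro (h0 | hn | ⟨k, hk0, hkl, hbad⟩)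
  · dsimp only at h0; simp only [wv_zero] at h0; exact ha h0
  · dsimp only at hn; rw [← endv_eq_wv] at hn; exact hb hn
  · dsimp only at hbad hkl
    obtain ⟨k', rfl⟩ := Nat.exists_eq_succ_of_ne_zero hk0.ne'
    have := (intok_iff_wv l a).mp hint k' (by omega)
    simp only [Nat.succ_sub_one] at hbad
    exact this hbad

/-- From a non-blocked `Walk`, extract a list walk. -/
lemma list_of_walk (E : V → V → Prop) (C : Set V) (Bad : V → Bool → V → Bool → V → Prop)
    (w : Walk E) (hnb : ¬ GB C Bad w) :
    ∃ l : List (Bool × V), Valid E (w.v 0) l ∧ endv (w.v 0) l = w.v w.len ∧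
      w.v 0 ∉ C ∧ w.v w.len ∉ C ∧
      IntOk (fun pv d1 x d2 y => ¬ Bad pv d1 x d2 y) (w.v 0) l := by
  unfold GB at hnb
  push_neg at hnb
  obtain ⟨h0, hn, hmid⟩ := hnb
  set l : List (Bool × V) := List.ofFn (fun i : Fin w.len => (w.d i, w.v (i + 1))) with hl
  have hlen : l.length = w.len := by simp [hl]
  have hwv : ∀ k, k ≤ w.len → wv (w.v 0) l k = w.v k := by
    intro k hk
    cases k with
    | zero => simp
    | succ k =>
        have hk' : k < l.length := by omega
        rw [wv_eq_get l (w.v 0) k hk']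
        simp [hl, List.get_ofFn]
  have hwd : ∀ k, k < w.len → wd l k = w.d k := by
    intro k hk
    have hk' : k < l.length := by omega
    rw [wd_eq_get l k hk']
    simp [hl, List.get_ofFn]
  refine ⟨l, ?_, ?_, h0, hn, ?_⟩
  · refine (valid_iff_wv E l (w.v 0)).mpr fun k hk => ?_
    have hk' : k < w.len := by omega
    rw [hwd k hk', hwv k (by omega), hwv (k + 1) (by omega)]
    exact w.valid k hk'
  · rw [endv_eq_wv, hlen, hwv w.len le_rfl]
  · refine (intok_iff_wv l (w.v 0)).mpr fun k hk => ?_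
    have hk' : k + 2 ≤ w.len := by omega
    rw [hwv k (by omega), hwv (k + 1) (by omega), hwv (k + 2) (by omega),
      hwd k (by omega), hwd (k + 1) (by omega)]
    have := hmid (k + 1) (by omega) (by omega)
    simpa using this

end AcyHelp

namespace AcyHelp

variable {V : Type*}

lemma sigma_sep_iff_d_sep (E E' : V → V → Prop) (h : IsAcyclification E E')
    (A B C : Set V) : SigmaSep E A B C ↔ DSep E' A B C := by
  constructor
  · intro hs W hWA hWB
    by_contra hbl
    rw [dblocked_iff] at hbl
    obtain ⟨l, hval, hend, h0C, hnC, hint⟩ := list_of_walk E' C (BadD E' C) W hbl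
    have hint' : IntOk (DOk E' C) (W.v 0) l := hint
    obtain ⟨out, hov, hoe, hoint, -, -⟩ := L2rec (C := C) h l (W.v 0) hval hint'
    have hoend : endv (W.v 0) out = W.v W.len := by rw [hoe, hend]
    have hoint' : IntOk (fun pv d1 x d2 y => ¬ BadS E C pv d1 x d2 y) (W.v 0) out :=
      hoint
    obtain ⟨W', hW'0, hW'n, hW'nb⟩ :=
      walk_of_list E C (BadS E C) (W.v 0) out hov h0C (hoend ▸ hnC) hoint'
    refine hW'nb ((sigmablocked_iff E C W').mp (hs W' ?_ ?_))
    · rw [hW'0]; exact hWA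
    · rw [hW'n, hoend]; exact hWB
  · intro hd W hWA hWB
    by_contra hbl
    rw [sigmablocked_iff] at hbl
    obtain ⟨l, hval, hend, h0C, hnC, hint⟩ := list_of_walk E C (BadS E C) W hbl
    have hint' : IntOk (SOk E C) (W.v 0) l := hint
    have hendC : endv (W.v 0) l ∉ C := by rw [hend]; exact hnC
    obtain ⟨out, hov, hoe, hoint⟩ :=
      L1start (C := C) h l.length l le_rfl (W.v 0) (W.v 0) hval hint' hendC
        (insc_refl E (W.v 0)) (Or.inl rfl)
    have hoend : endv (W.v 0) out = W.v W.len := by rw [hoe, hend]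
    have hoint' : IntOk (fun pv d1 x d2 y => ¬ BadD E' C pv d1 x d2 y) (W.v 0) out :=
      hoint
    obtain ⟨W', hW'0, hW'n, hW'nb⟩ :=
      walk_of_list E' C (BadD E' C) (W.v 0) out hov h0C (hoend ▸ hnC) hoint'
    refine hW'nb ((dblocked_iff E' C W').mp (hd W' ?_ ?_))
    · rw [hW'0]; exact hWA
    · rw [hW'n, hoend]; exact hWB

lemma imsigma_eq_imd (E E' : V → V → Prop) (h : IsAcyclification E E') :
    IMsigma E = IMd E' := by
  ext t
  exact sigma_sep_iff_d_sep E E' h t.1 t.2.1 t.2.2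

end AcyHelp

/-- Two finite directed graphs `G1, G2` (possibly cyclic) on the
same vertex set are σ-Markov equivalent iff any acyclifications `G1', G2'` of
them are d-Markov equivalent. -/
theorem sigma_markov_equiv_iff_d_markov_equiv {V : Type*} [Fintype V]
    (E1 E2 E1' E2' : V → V → Prop)
    (hE1 : ∀ v, ¬ E1 v v) (hE2 : ∀ v, ¬ E2 v v)
    (h1 : IsAcyclification E1 E1') (h2 : IsAcyclification E2 E2') :
    IMsigma E1 = IMsigma E2 ↔ IMd E1' = IMd E2' := by
  rw [AcyHelp.imsigma_eq_imd E1 E1' h1, AcyHelp.imsigma_eq_imd E2 E2' h2]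
end
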